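/- arXiv:1709.00564 — 8 statements merged into one kernel-verified Lean document; each statement's English description precedes it below -/
import Mathlib

section
/- Let T be a woven based matrix over an abelian group H, let g ∈ G_j\{s_j} and g' ∈ G_k\{s_k} with g ≠ g', and let □,△ ∈ {1,2}. Suppose the intersection move I_△(g';x_3,x_4) is applicable to T and I_□(g;x_1,x_2) is applicable to the result. Then I_□(g;x_1,x_2) is applicable to T, I_△(g';x_3,x_4) is applicable to the result, and the two composites yield the same woven based matrix. -/
universe u v

/-- A woven based matrix over an abelian group `H`: parts `G 1, …, G n` with base
elements `s i ∈ G i`, a weaving set `I`, and a skew-symmetric pairing `b` which is a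
weaving map on `(G ∪ I) × I`. -/
structure WovenBasedMatrix (α : Type u) (H : Type v) [DecidableEq α] [AddCommGroup H]
    (n : ℕ) where
  G : Fin n → Finset α
  I : Finset α
  s : Fin n → α
  b : α → α → H
  s_mem : ∀ i, s i ∈ G i
  disjointG : ∀ i j, i ≠ j → Disjoint (G i) (G j)
  disjointI : ∀ i, Disjoint (G i) I
  skew : ∀ a ∈ Finset.univ.biUnion G ∪ I, ∀ a' ∈ Finset.univ.biUnion G ∪ I,
    b a a' = - b a' a
  diag : ∀ a ∈ Finset.univ.biUnion G ∪ I, b a a = 0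
  inter_zero : ∀ x ∈ I, ∀ y ∈ I, b x y = 0
  weave_two : ∀ x ∈ I, ∃ i j : Fin n, i ≠ j ∧ b (s i) x ≠ 0 ∧ b (s j) x ≠ 0 ∧
    b (s i) x = - b (s j) x ∧ ∀ k : Fin n, b (s k) x ≠ 0 → k = i ∨ k = j
  weave_val : ∀ i : Fin n, ∀ g ∈ G i, ∀ x ∈ I, b g x = 0 ∨ b g x = b (s i) x

variable {α : Type u} {H : Type v} [DecidableEq α] [AddCommGroup H] {n : ℕ}

/-- The underlying set `G ∪ I` of a woven based matrix. -/
def WovenBasedMatrix.carrier (T : WovenBasedMatrix α H n) : Finset α :=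
  Finset.univ.biUnion T.G ∪ T.I

/-- The effect of the intersection move `I_□(g; x₁, x₂)` on the skew-symmetric map `b`,
where `sj` is the base element of the part containing `g`:
`b' g xₖ = b sj xₖ - b g xₖ` for `k = 1,2` (and symmetrically), `b' = b` elsewhere. -/
def IMap (b : α → α → H) (sj g x1 x2 : α) : α → α → H := fun a a' =>
  if a = g ∧ (a' = x1 ∨ a' = x2) then b sj a' - b a a'
  else if a' = g ∧ (a = x1 ∨ a = x2) then b a sj - b a a'
  else b a a'

/-- `x₁, x₂` are a `g`-annihilating pair (with `sj` the base element of `g`'s part). -/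
def IsGAnn (b : α → α → H) (sj g x1 x2 : α) : Prop :=
  b g x1 + b g x2 = 0 ∧ b sj x1 + b sj x2 = 0

/-- `x₁, x₂` are a `g`-unequal pair (with `sj` the base element of `g`'s part). -/
def IsGUnequal (b : α → α → H) (sj g x1 x2 : α) : Prop :=
  b g x1 ≠ b g x2 ∧ b sj x1 = b sj x2

/-- `MoveApplicable k b sj g x1 x2`: the intersection move `I_{k+1}(g;x₁,x₂)` is applicable to
the matrix `b`.  Here `k = 0` encodes the move `I₁` (needing a `g`-annihilating pair) and
`k = 1` encodes the move `I₂` (needing a `g`-unequal pair). -/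
def MoveApplicable (k : Fin 2) (b : α → α → H) (sj g x1 x2 : α) : Prop :=
  if k = 0 then IsGAnn b sj g x1 x2 else IsGUnequal b sj g x1 x2

/-- The data of an intersection move `I_{sq+1}(g; x₁, x₂)` with `g` in the part `G j`. -/
structure MoveDatum (α : Type u) (n : ℕ) where
  j : Fin n
  sq : Fin 2
  g : α
  x1 : α
  x2 : α

/-- The move datum refers to an element `g ∈ G j \ {s j}` and a pair of distinct
elements of the weaving set `I`. -/
def MoveDatum.valid (m : MoveDatum α n) (T : WovenBasedMatrix α H n) : Prop :=
  m.g ∈ T.G m.j ∧ m.g ≠ T.s m.j ∧ m.x1 ∈ T.I ∧ m.x2 ∈ T.I ∧ m.x1 ≠ m.x2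

/-- Apply a finite sequence of intersection moves (listed in order of application)
to the skew-symmetric map `b`. -/
def applyMoves (s : Fin n → α) : List (MoveDatum α n) → (α → α → H) → (α → α → H)
  | [], b => b
  | m :: ms, b => applyMoves s ms (IMap b (s m.j) m.g m.x1 m.x2)

/-- A finite sequence of intersection moves is applicable to `b`: each move in turn is
applicable to the result of the previous ones. -/
def movesApplicable (s : Fin n → α) : List (MoveDatum α n) → (α → α → H) → Prop
  | [], _ => True
  | m :: ms, b => MoveApplicable m.sq b (s m.j) m.g m.x1 m.x2 ∧
      movesApplicable s ms (IMap b (s m.j) m.g m.x1 m.x2)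

/-- A sequence of intersection moves is reduced if it splits into consecutive blocks,
each block acting on a single element `g` of `G`, with pairwise distinct elements `g`
across blocks, and within each block every element of the weaving set appears in at
most one move. -/
def ReducedMoves (L : List (MoveDatum α n)) : Prop :=
  ∃ Bs : List (List (MoveDatum α n)),
    L = Bs.flatten ∧
    (∀ B ∈ Bs, ∀ m ∈ B, ∀ m' ∈ B, m.g = m'.g) ∧
    Bs.Pairwise (fun B B' => ∀ m ∈ B, ∀ m' ∈ B', m.g ≠ m'.g) ∧
    (∀ B ∈ Bs, ∀ x : α, (B.countP fun m => decide (m.x1 = x ∨ m.x2 = x)) ≤ 1)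

/-- `M_{1,j}`: elementary extension adding a `G j`-annihilating element `g`. -/
def ExtRel1 (T T' : WovenBasedMatrix α H n) : Prop :=
  ∃ (j : Fin n) (g : α), g ∉ T.carrier ∧
    T'.s = T.s ∧ T'.I = T.I ∧ T'.G j = insert g (T.G j) ∧
    (∀ i : Fin n, i ≠ j → T'.G i = T.G i) ∧
    (∀ a ∈ T.carrier, ∀ a' ∈ T.carrier, T'.b a a' = T.b a a') ∧
    (∀ a ∈ T'.carrier, T'.b g a = 0)

/-- `M_{2,j}`: elementary extension adding a `G j`-core element `g`. -/
def ExtRel2 (T T' : WovenBasedMatrix α H n) : Prop :=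
  ∃ (j : Fin n) (g : α), g ∉ T.carrier ∧
    T'.s = T.s ∧ T'.I = T.I ∧ T'.G j = insert g (T.G j) ∧
    (∀ i : Fin n, i ≠ j → T'.G i = T.G i) ∧
    (∀ a ∈ T.carrier, ∀ a' ∈ T.carrier, T'.b a a' = T.b a a') ∧
    (∀ a ∈ T'.carrier, T'.b g a = T'.b (T'.s j) a)

/-- `M_{3,j}`: elementary extension adding a `G j`-complementary pair `g₁, g₂`. -/
def ExtRel3 (T T' : WovenBasedMatrix α H n) : Prop :=
  ∃ (j : Fin n) (g1 g2 : α), g1 ≠ g2 ∧ g1 ∉ T.carrier ∧ g2 ∉ T.carrier ∧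
    T'.s = T.s ∧ T'.I = T.I ∧ T'.G j = insert g1 (insert g2 (T.G j)) ∧
    (∀ i : Fin n, i ≠ j → T'.G i = T.G i) ∧
    (∀ a ∈ T.carrier, ∀ a' ∈ T.carrier, T'.b a a' = T.b a a') ∧
    (∀ a ∈ T'.carrier, T'.b g1 a + T'.b g2 a = T'.b (T'.s j) a)

/-- `M₄`: elementary extension adding a sum-annihilating pair `x₁, x₂` to the
weaving set. -/
def ExtRel4 (T T' : WovenBasedMatrix α H n) : Prop :=
  ∃ (x1 x2 : α), x1 ≠ x2 ∧ x1 ∉ T.carrier ∧ x2 ∉ T.carrier ∧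
    T'.s = T.s ∧ T'.G = T.G ∧ T'.I = insert x1 (insert x2 T.I) ∧
    (∀ a ∈ T.carrier, ∀ a' ∈ T.carrier, T'.b a a' = T.b a a') ∧
    (∀ a ∈ T'.carrier, T'.b x1 a + T'.b x2 a = 0)

/-- `T'` is obtained from `T` by a single elementary extension; the inverse elementary
extensions are given by the reversed relation. -/
def ExtRel (T T' : WovenBasedMatrix α H n) : Prop :=
  ExtRel1 T T' ∨ ExtRel2 T T' ∨ ExtRel3 T T' ∨ ExtRel4 T T'

/-- `T'` is obtained from `T` by the elementary extension `M_k` (`k ∈ {1,2,3,4}`). -/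
def ExtRelAt (k : ℕ) (T T' : WovenBasedMatrix α H n) : Prop :=
  match k with
  | 1 => ExtRel1 T T'
  | 2 => ExtRel2 T T'
  | 3 => ExtRel3 T T'
  | 4 => ExtRel4 T T'
  | _ => False

/-- Isomorphism of woven based matrices: a bijection of the underlying sets together with
a permutation of the indices, matching base elements, parts, weaving sets and pairings. -/
def IsoRel (T T' : WovenBasedMatrix α H n) : Prop :=
  ∃ (Φ : α → α) (σ : Equiv.Perm (Fin n)),
    Set.BijOn Φ ↑T.carrier ↑T'.carrier ∧
    (∀ i, Φ (T.s i) = T'.s (σ i)) ∧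
    (∀ i, (T.G i).image Φ = T'.G (σ i)) ∧
    T.I.image Φ = T'.I ∧
    (∀ a ∈ T.carrier, ∀ a' ∈ T.carrier, T'.b (Φ a) (Φ a') = T.b a a')

/-- `T'` is obtained from `T` by a single intersection move. -/
def IMoveRel (T T' : WovenBasedMatrix α H n) : Prop :=
  ∃ m : MoveDatum α n, m.valid T ∧
    MoveApplicable m.sq T.b (T.s m.j) m.g m.x1 m.x2 ∧
    T'.G = T.G ∧ T'.I = T.I ∧ T'.s = T.s ∧
    (∀ a ∈ T.carrier, ∀ a' ∈ T.carrier,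
      T'.b a a' = IMap T.b (T.s m.j) m.g m.x1 m.x2 a a')

/-- `T` and `T'` are equal woven based matrices (same parts, base elements, weaving set
and the same pairing on the underlying set). -/
def WBMEq (T T' : WovenBasedMatrix α H n) : Prop :=
  T'.G = T.G ∧ T'.I = T.I ∧ T'.s = T.s ∧
  ∀ a ∈ T.carrier, ∀ a' ∈ T.carrier, T'.b a a' = T.b a a'

/-- One step of the homology relation: an elementary extension, an inverse elementary
extension, an intersection move, or an isomorphism. -/
def HomStep (T T' : WovenBasedMatrix α H n) : Prop :=
  ExtRel T T' ∨ ExtRel T' T ∨ IMoveRel T T' ∨ IsoRel T T'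

/-- Two woven based matrices are homologous if they are related by a finite sequence of
elementary extensions and their inverses, intersection moves, and isomorphisms. -/
def Homologous : WovenBasedMatrix α H n → WovenBasedMatrix α H n → Prop :=
  Relation.ReflTransGen HomStep

/-- No inverse elementary extension applies to `T`: there is no `G i`-annihilating
element, no `G i`-core element, no `G i`-complementary pair, and no sum-annihilating
pair in the weaving set. -/
def NoInverseExtension (T : WovenBasedMatrix α H n) : Prop :=
  (∀ i : Fin n, ∀ g ∈ T.G i, g ≠ T.s i → ¬ (∀ a ∈ T.carrier, T.b g a = 0)) ∧
  (∀ i : Fin n, ∀ g ∈ T.G i, g ≠ T.s i →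
    ¬ (∀ a ∈ T.carrier, T.b g a = T.b (T.s i) a)) ∧
  (∀ i : Fin n, ∀ g1 ∈ T.G i, ∀ g2 ∈ T.G i, g1 ≠ T.s i → g2 ≠ T.s i → g1 ≠ g2 →
    ¬ (∀ a ∈ T.carrier, T.b g1 a + T.b g2 a = T.b (T.s i) a)) ∧
  (∀ x1 ∈ T.I, ∀ x2 ∈ T.I, x1 ≠ x2 → ¬ (∀ a ∈ T.carrier, T.b x1 a + T.b x2 a = 0))

/-- A woven based matrix is primitive if after every finite sequence of intersection
moves, no inverse elementary extension can be applied. -/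
def Primitive (T : WovenBasedMatrix α H n) : Prop :=
  ∀ T' : WovenBasedMatrix α H n, Relation.ReflTransGen IMoveRel T T' →
    NoInverseExtension T'

/-- intersection moves acting on distinct elements `g ≠ g'` commute. -/
theorem intersection_moves_commute_distinct_elements
    {α : Type u} {H : Type v} [DecidableEq α] [AddCommGroup H] {n : ℕ}
    (T : WovenBasedMatrix α H n) (j k : Fin n) (g g' x1 x2 x3 x4 : α)
    (hg : g ∈ T.G j) (hgs : g ≠ T.s j)
    (hg' : g' ∈ T.G k) (hg's : g' ≠ T.s k)
    (hgg' : g ≠ g')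
    (hx1 : x1 ∈ T.I) (hx2 : x2 ∈ T.I) (hx12 : x1 ≠ x2)
    (hx3 : x3 ∈ T.I) (hx4 : x4 ∈ T.I) (hx34 : x3 ≠ x4)
    (sq tr : Fin 2)
    (happ1 : MoveApplicable tr T.b (T.s k) g' x3 x4)
    (happ2 : MoveApplicable sq (IMap T.b (T.s k) g' x3 x4) (T.s j) g x1 x2) :
    MoveApplicable sq T.b (T.s j) g x1 x2 ∧
    MoveApplicable tr (IMap T.b (T.s j) g x1 x2) (T.s k) g' x3 x4 ∧
    IMap (IMap T.b (T.s j) g x1 x2) (T.s k) g' x3 x4 =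
      IMap (IMap T.b (T.s k) g' x3 x4) (T.s j) g x1 x2 := by
  classical
  have hGI : ∀ i : Fin n, ∀ a ∈ T.G i, ∀ x ∈ T.I, a ≠ x := by
    intro i a ha x hx h
    exact (Finset.disjoint_left.mp (T.disjointI i) ha) (h ▸ hx)
  have hx1g' : x1 ≠ g' := fun h => hGI k g' hg' x1 hx1 h.symm
  have hx2g' : x2 ≠ g' := fun h => hGI k g' hg' x2 hx2 h.symm
  have hx3g : x3 ≠ g := fun h => hGI j g hg x3 hx3 h.symm
  have hx4g : x4 ≠ g := fun h => hGI j g hg x4 hx4 h.symm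
  have hsjg' : T.s j ≠ g' := by
    by_cases hjk : j = k
    · subst hjk; exact fun h => hg's h.symm
    · intro h
      exact (Finset.disjoint_left.mp (T.disjointG j k hjk) (T.s_mem j)) (h ▸ hg')
  have hskg : T.s k ≠ g := by
    by_cases hjk : k = j
    · subst hjk; exact fun h => hgs h.symm
    · intro h
      exact (Finset.disjoint_left.mp (T.disjointG k j hjk) (T.s_mem k)) (h ▸ hg)
  -- values of the inner move at the pairs used by the outer move are unchanged
  have e1 : IMap T.b (T.s k) g' x3 x4 g x1 = T.b g x1 := by
    simp [IMap, hgg', hgg'.symm, hx1g', hx1g'.symm, hx2g', hx2g'.symm, hx3g, hx3g.symm, hx4g, hx4g.symm, hsjg', hsjg'.symm, hskg, hskg.symm]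
  have e2 : IMap T.b (T.s k) g' x3 x4 g x2 = T.b g x2 := by
    simp [IMap, hgg', hgg'.symm, hx1g', hx1g'.symm, hx2g', hx2g'.symm, hx3g, hx3g.symm, hx4g, hx4g.symm, hsjg', hsjg'.symm, hskg, hskg.symm]
  have e3 : IMap T.b (T.s k) g' x3 x4 (T.s j) x1 = T.b (T.s j) x1 := by
    simp [IMap, hgg', hgg'.symm, hx1g', hx1g'.symm, hx2g', hx2g'.symm, hx3g, hx3g.symm, hx4g, hx4g.symm, hsjg', hsjg'.symm, hskg, hskg.symm]
  have e4 : IMap T.b (T.s k) g' x3 x4 (T.s j) x2 = T.b (T.s j) x2 := by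
    simp [IMap, hgg', hgg'.symm, hx1g', hx1g'.symm, hx2g', hx2g'.symm, hx3g, hx3g.symm, hx4g, hx4g.symm, hsjg', hsjg'.symm, hskg, hskg.symm]
  have f1 : IMap T.b (T.s j) g x1 x2 g' x3 = T.b g' x3 := by
    simp [IMap, hgg', hgg'.symm, hx1g', hx1g'.symm, hx2g', hx2g'.symm, hx3g, hx3g.symm, hx4g, hx4g.symm, hsjg', hsjg'.symm, hskg, hskg.symm]
  have f2 : IMap T.b (T.s j) g x1 x2 g' x4 = T.b g' x4 := by
    simp [IMap, hgg', hgg'.symm, hx1g', hx1g'.symm, hx2g', hx2g'.symm, hx3g, hx3g.symm, hx4g, hx4g.symm, hsjg', hsjg'.symm, hskg, hskg.symm]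
  have f3 : IMap T.b (T.s j) g x1 x2 (T.s k) x3 = T.b (T.s k) x3 := by
    simp [IMap, hgg', hgg'.symm, hx1g', hx1g'.symm, hx2g', hx2g'.symm, hx3g, hx3g.symm, hx4g, hx4g.symm, hsjg', hsjg'.symm, hskg, hskg.symm]
  have f4 : IMap T.b (T.s j) g x1 x2 (T.s k) x4 = T.b (T.s k) x4 := by
    simp [IMap, hgg', hgg'.symm, hx1g', hx1g'.symm, hx2g', hx2g'.symm, hx3g, hx3g.symm, hx4g, hx4g.symm, hsjg', hsjg'.symm, hskg, hskg.symm]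
  refine ⟨?_, ?_, ?_⟩
  · unfold MoveApplicable IsGAnn IsGUnequal at happ2 ⊢
    split_ifs at happ2 ⊢ <;>
      simpa only [e1, e2, e3, e4] using happ2
  · unfold MoveApplicable IsGAnn IsGUnequal at happ1 ⊢
    split_ifs at happ1 ⊢ <;>
      simpa only [f1, f2, f3, f4] using happ1
  · funext a a'
    simp only [IMap]
    by_cases C1 : a = g ∧ (a' = x1 ∨ a' = x2)
    · have D1 : ¬ (a = g' ∧ (a' = x3 ∨ a' = x4)) := fun h => hgg' (C1.1 ▸ h.1 ▸ rfl)
      have D2 : ¬ (a' = g' ∧ (a = x3 ∨ a = x4)) := by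
        rintro ⟨h, _⟩
        rcases C1.2 with h' | h' <;> [exact hx1g' (h' ▸ h); exact hx2g' (h' ▸ h)]
      have hsj : ¬ (T.s j = g' ∧ (a' = x3 ∨ a' = x4)) := fun h => hsjg' h.1
      have hsj2 : ¬ (a' = g' ∧ (T.s j = x3 ∨ T.s j = x4)) := fun h => D2 ⟨h.1, False.elim (by
        rcases C1.2 with h' | h' <;> [exact hx1g' (h' ▸ h.1); exact hx2g' (h' ▸ h.1)])⟩
      simp only [if_pos C1, if_neg D1, if_neg D2]
      rcases C1.2 with h' | h' <;> subst h' <;>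
        simp [IMap, hgg', hgg'.symm, hx1g', hx1g'.symm, hx2g', hx2g'.symm, hx3g, hx3g.symm, hx4g, hx4g.symm, hsjg', hsjg'.symm, hskg, hskg.symm]
    · by_cases C2 : a' = g ∧ (a = x1 ∨ a = x2)
      · have D1 : ¬ (a = g' ∧ (a' = x3 ∨ a' = x4)) := by
          rintro ⟨h, _⟩
          rcases C2.2 with h' | h' <;> [exact hx1g' (h' ▸ h); exact hx2g' (h' ▸ h)]
        have D2 : ¬ (a' = g' ∧ (a = x3 ∨ a = x4)) := fun h => hgg' (C2.1 ▸ h.1 ▸ rfl)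
        simp only [if_neg C1, if_pos C2, if_neg D1, if_neg D2]
        rcases C2.2 with h' | h' <;> subst h' <;>
          simp [IMap, hgg', hgg'.symm, hx1g', hx1g'.symm, hx2g', hx2g'.symm, hx3g, hx3g.symm, hx4g, hx4g.symm, hsjg', hsjg'.symm, hskg, hskg.symm]
      · by_cases D1 : a = g' ∧ (a' = x3 ∨ a' = x4)
        · have hnc1 : ¬ (T.s k = g ∧ (a' = x1 ∨ a' = x2)) := fun h => hskg h.1
          simp only [if_neg C1, if_neg C2, if_pos D1]
          rcases D1.2 with h' | h' <;> subst h' <;>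
            simp [IMap, hgg', hgg'.symm, hx1g', hx1g'.symm, hx2g', hx2g'.symm, hx3g, hx3g.symm, hx4g, hx4g.symm, hsjg', hsjg'.symm, hskg, hskg.symm]
        · by_cases D2 : a' = g' ∧ (a = x3 ∨ a = x4)
          · simp only [if_neg C1, if_neg C2, if_neg D1, if_pos D2]
            rcases D2.2 with h' | h' <;> subst h' <;>
              simp [IMap, hgg', hgg'.symm, hx1g', hx1g'.symm, hx2g', hx2g'.symm, hx3g, hx3g.symm, hx4g, hx4g.symm, hsjg', hsjg'.symm, hskg, hskg.symm]
          · simp only [if_neg C1, if_neg C2, if_neg D1, if_neg D2]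
end

section
/- Let T be a woven based matrix over an abelian group H, let g ∈ G_j\{s_j}, □,△ ∈ {1,2}, and x_1,x_2,x_3,x_4 ∈ I with {x_1,x_2}∩{x_3,x_4}=∅. If the intersection move I_△(g;x_1,x_2) is applicable to T and I_□(g;x_3,x_4) is applicable to the result, then I_□(g;x_3,x_4) is applicable to T, I_△(g;x_1,x_2) is applicable to the result, and the two composites yield the same woven based matrix. -/
universe u v

variable {α : Type u} {H : Type v} [DecidableEq α] [AddCommGroup H] {n : ℕ}

section Helpers
variable {α : Type u} {H : Type v} [DecidableEq α] [AddCommGroup H]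

lemma IMap_eq_of_not {b : α → α → H} {sj g x1 x2 a a' : α}
    (h1 : ¬(a = g ∧ (a' = x1 ∨ a' = x2))) (h2 : ¬(a' = g ∧ (a = x1 ∨ a = x2))) :
    IMap b sj g x1 x2 a a' = b a a' := by
  simp only [IMap, if_neg h1, if_neg h2]

lemma IMap_g {b : α → α → H} {sj g x1 x2 a' : α} (h : a' = x1 ∨ a' = x2) :
    IMap b sj g x1 x2 g a' = b sj a' - b g a' := by
  unfold IMap; rw [if_pos ⟨rfl, h⟩]

end Helpers

set_option maxHeartbeats 3000000 in
/-- intersection moves acting on the same element `g` but on disjoint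
pairs of the weaving set commute. -/
theorem intersection_moves_commute_disjoint_pairs
    {α : Type u} {H : Type v} [DecidableEq α] [AddCommGroup H] {n : ℕ}
    (T : WovenBasedMatrix α H n) (j : Fin n) (g x1 x2 x3 x4 : α)
    (hg : g ∈ T.G j) (hgs : g ≠ T.s j)
    (hx1 : x1 ∈ T.I) (hx2 : x2 ∈ T.I) (hx12 : x1 ≠ x2)
    (hx3 : x3 ∈ T.I) (hx4 : x4 ∈ T.I) (hx34 : x3 ≠ x4)
    (h13 : x1 ≠ x3) (h14 : x1 ≠ x4) (h23 : x2 ≠ x3) (h24 : x2 ≠ x4)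
    (sq tr : Fin 2)
    (happ1 : MoveApplicable tr T.b (T.s j) g x1 x2)
    (happ2 : MoveApplicable sq (IMap T.b (T.s j) g x1 x2) (T.s j) g x3 x4) :
    MoveApplicable sq T.b (T.s j) g x3 x4 ∧
    MoveApplicable tr (IMap T.b (T.s j) g x3 x4) (T.s j) g x1 x2 ∧
    IMap (IMap T.b (T.s j) g x3 x4) (T.s j) g x1 x2 =
      IMap (IMap T.b (T.s j) g x1 x2) (T.s j) g x3 x4 := by
  have hgI : g ∉ T.I := Finset.disjoint_left.mp (T.disjointI j) hg
  have hsI : T.s j ∉ T.I := Finset.disjoint_left.mp (T.disjointI j) (T.s_mem j)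
  have hg1 : g ≠ x1 := fun h => hgI (h ▸ hx1)
  have hg2 : g ≠ x2 := fun h => hgI (h ▸ hx2)
  have hg3 : g ≠ x3 := fun h => hgI (h ▸ hx3)
  have hg4 : g ≠ x4 := fun h => hgI (h ▸ hx4)
  have hs1 : T.s j ≠ x1 := fun h => hsI (h ▸ hx1)
  have hs2 : T.s j ≠ x2 := fun h => hsI (h ▸ hx2)
  have hs3 : T.s j ≠ x3 := fun h => hsI (h ▸ hx3)
  have hs4 : T.s j ≠ x4 := fun h => hsI (h ▸ hx4)
  -- values of the two single moves at relevant points are unchanged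
  have e12 : ∀ y, g ≠ y → T.s j ≠ y → y ≠ x1 → y ≠ x2 →
      (IMap T.b (T.s j) g x1 x2 g y = T.b g y ∧
       IMap T.b (T.s j) g x1 x2 (T.s j) y = T.b (T.s j) y) := by
    intro y hgy hsy hy1 hy2
    constructor <;> apply IMap_eq_of_not <;> simp_all [Ne.symm hgs]
  have e34 : ∀ y, g ≠ y → T.s j ≠ y → y ≠ x3 → y ≠ x4 →
      (IMap T.b (T.s j) g x3 x4 g y = T.b g y ∧
       IMap T.b (T.s j) g x3 x4 (T.s j) y = T.b (T.s j) y) := by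
    intro y hgy hsy hy3 hy4
    constructor <;> apply IMap_eq_of_not <;> simp_all [Ne.symm hgs]
  obtain ⟨eg3, es3⟩ := e12 x3 hg3 hs3 (Ne.symm h13) (Ne.symm h23)
  obtain ⟨eg4, es4⟩ := e12 x4 hg4 hs4 (Ne.symm h14) (Ne.symm h24)
  obtain ⟨eg1, es1⟩ := e34 x1 hg1 hs1 h13 h14
  obtain ⟨eg2, es2⟩ := e34 x2 hg2 hs2 h23 h24
  refine ⟨?_, ?_, ?_⟩
  · unfold MoveApplicable IsGAnn IsGUnequal at happ2 ⊢
    split_ifs at happ2 ⊢ <;> simp_all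
  · unfold MoveApplicable IsGAnn IsGUnequal at happ1 ⊢
    split_ifs at happ1 ⊢ <;> simp_all
  · funext a a'
    simp only [IMap]
    split_ifs <;> simp_all
end

section
/- Let T be a woven based matrix over an abelian group H, let g ∈ G_j\{s_j}, and let x_1,x_2,x_3 ∈ I be pairwise distinct. Suppose x_1,x_2 are g-unequal in T and let T_1 be the result of applying I_2(g;x_1,x_2) to T; suppose x_2,x_3 are g-annihilating in T_1 and let T_2 be the result of applying I_1(g;x_2,x_3) to T_1. Then x_1,x_3 are g-annihilating in T, and applying I_1(g;x_1,x_3) to T yields T_2. -/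
universe u v

variable {α : Type u} {H : Type v} [DecidableEq α] [AddCommGroup H] {n : ℕ}

/-- `I₁(g;x₂,x₃) ∘ I₂(g;x₁,x₂)` can be replaced by `I₁(g;x₁,x₃)`. -/
theorem I1_comp_I2_eq_I1
    {α : Type u} {H : Type v} [DecidableEq α] [AddCommGroup H] {n : ℕ}
    (T : WovenBasedMatrix α H n) (j : Fin n) (g x1 x2 x3 : α)
    (hg : g ∈ T.G j) (hgs : g ≠ T.s j)
    (hx1 : x1 ∈ T.I) (hx2 : x2 ∈ T.I) (hx3 : x3 ∈ T.I)
    (h12 : x1 ≠ x2) (h13 : x1 ≠ x3) (h23 : x2 ≠ x3)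
    (h1 : IsGUnequal T.b (T.s j) g x1 x2)
    (h2 : IsGAnn (IMap T.b (T.s j) g x1 x2) (T.s j) g x2 x3) :
    IsGAnn T.b (T.s j) g x1 x3 ∧
    IMap T.b (T.s j) g x1 x3 =
      IMap (IMap T.b (T.s j) g x1 x2) (T.s j) g x2 x3 := by
  have hgI : g ∉ T.I := Finset.disjoint_left.mp (T.disjointI j) hg
  have hsI : T.s j ∉ T.I := Finset.disjoint_left.mp (T.disjointI j) (T.s_mem j)
  have hgx1 : g ≠ x1 := fun h => hgI (h ▸ hx1)
  have hgx2 : g ≠ x2 := fun h => hgI (h ▸ hx2)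
  have hgx3 : g ≠ x3 := fun h => hgI (h ▸ hx3)
  have hsx1 : T.s j ≠ x1 := fun h => hsI (h ▸ hx1)
  have hsx2 : T.s j ≠ x2 := fun h => hsI (h ▸ hx2)
  have hsx3 : T.s j ≠ x3 := fun h => hsI (h ▸ hx3)
  have hsg : T.s j ≠ g := Ne.symm hgs
  obtain ⟨h1a, h1b⟩ := h1
  obtain ⟨h2a, h2b⟩ := h2
  have e1 : IMap T.b (T.s j) g x1 x2 g x2 = T.b (T.s j) x2 - T.b g x2 := by
    simp [IMap]
  have e2 : IMap T.b (T.s j) g x1 x2 g x3 = T.b g x3 := by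
    simp [IMap, h13.symm, h23.symm, hgx3.symm]
  have e3 : IMap T.b (T.s j) g x1 x2 (T.s j) x2 = T.b (T.s j) x2 := by
    simp [IMap, hsg, hgx2.symm]
  have e4 : IMap T.b (T.s j) g x1 x2 (T.s j) x3 = T.b (T.s j) x3 := by
    simp [IMap, hsg, hgx3.symm]
  rw [e1, e2] at h2a
  rw [e3, e4] at h2b
  have hv1 := T.weave_val j g hg x1 hx1
  have hv2 := T.weave_val j g hg x2 hx2
  have key : IsGAnn T.b (T.s j) g x1 x3 := by
    constructor
    · rcases hv1 with h | h <;> rcases hv2 with h' | h'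
      · exact absurd (h.trans h'.symm) h1a
      · rw [h, zero_add]
        rw [h', sub_self, zero_add] at h2a
        exact h2a
      · rw [h, h1b]
        rw [h', sub_zero] at h2a
        exact h2a
      · exact absurd (h.trans (h1b.trans h'.symm)) h1a
    · rw [h1b]; exact h2b
  refine ⟨key, ?_⟩
  funext a a'
  by_cases ha : a = g
  · subst ha
    by_cases k1 : a' = x1
    · subst k1
      simp [IMap, h12, h13, h12.symm, h13.symm, hgx1.symm]
    · by_cases k2 : a' = x2
      · subst k2
        simp only [IMap, h23, h23.symm, h13, h13.symm, h12, hgx2.symm, k1, hgs, hsg, h12.symm,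
          or_false, false_or, or_true, true_or, and_true, and_false, false_and, true_and,
          and_self, if_true, if_false, eq_self_iff_true, not_false_iff, if_neg, reduceIte]
        abel
      · by_cases k3 : a' = x3
        · subst k3
          simp [IMap, h13.symm, h23.symm, hgx3.symm, k1, k2]
        · simp [IMap, k1, k2, k3, hgx1, hgx2, hgx3]
  · by_cases ha' : a' = g
    · subst ha'
      by_cases k1 : a = x1
      · subst k1
        simp [IMap, h12, h13, h12.symm, h13.symm, hgx1.symm, ha]
      · by_cases k2 : a = x2
        · subst k2
          simp only [IMap, h23, h23.symm, h13, h13.symm, h12, hgx2.symm, k1, ha, hgs, hsg, h12.symm,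
            or_false, false_or, or_true, true_or, and_true, and_false, false_and, true_and,
            and_self, if_true, if_false, eq_self_iff_true, not_false_iff, if_neg, reduceIte]
          abel
        · by_cases k3 : a = x3
          · subst k3
            simp [IMap, h13.symm, h23.symm, hgx3.symm, k1, k2, ha]
          · simp [IMap, k1, k2, k3, ha, hgx1, hgx2, hgx3]
    · simp [IMap, ha, ha']
end

section
/- Let T be a woven based matrix over an abelian group H, let g ∈ G_j\{s_j}, and let x_1,x_2,x_3 ∈ I be pairwise distinct. Suppose x_1,x_2 are g-annihilating in T and let T_1 be the result of applying I_1(g;x_1,x_2) to T; suppose x_2,x_3 are g-unequal in T_1 and let T_2 be the result of applying I_2(g;x_2,x_3) to T_1. Then x_1,x_3 are g-annihilating in T, and applying I_1(g;x_1,x_3) to T yields T_2. -/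
universe u v

variable {α : Type u} {H : Type v} [DecidableEq α] [AddCommGroup H] {n : ℕ}

/-- `I₂(g;x₂,x₃) ∘ I₁(g;x₁,x₂)` can be replaced by `I₁(g;x₁,x₃)`. -/
theorem I2_comp_I1_eq_I1
    {α : Type u} {H : Type v} [DecidableEq α] [AddCommGroup H] {n : ℕ}
    (T : WovenBasedMatrix α H n) (j : Fin n) (g x1 x2 x3 : α)
    (hg : g ∈ T.G j) (hgs : g ≠ T.s j)
    (hx1 : x1 ∈ T.I) (hx2 : x2 ∈ T.I) (hx3 : x3 ∈ T.I)
    (h12 : x1 ≠ x2) (h13 : x1 ≠ x3) (h23 : x2 ≠ x3)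
    (h1 : IsGAnn T.b (T.s j) g x1 x2)
    (h2 : IsGUnequal (IMap T.b (T.s j) g x1 x2) (T.s j) g x2 x3) :
    IsGAnn T.b (T.s j) g x1 x3 ∧
    IMap T.b (T.s j) g x1 x3 =
      IMap (IMap T.b (T.s j) g x1 x2) (T.s j) g x2 x3 := by
  have hgx1 : g ≠ x1 := fun h => (Finset.disjoint_left.mp (T.disjointI j) hg) (h ▸ hx1)
  have hgx2 : g ≠ x2 := fun h => (Finset.disjoint_left.mp (T.disjointI j) hg) (h ▸ hx2)
  have hgx3 : g ≠ x3 := fun h => (Finset.disjoint_left.mp (T.disjointI j) hg) (h ▸ hx3)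
  have hsg : T.s j ≠ g := Ne.symm hgs
  obtain ⟨h2u, h2e⟩ := h2
  have hss : T.b (T.s j) x2 = T.b (T.s j) x3 := by
    simpa [IMap, hsg, Ne.symm hgx2, Ne.symm hgx3] using h2e
  have h2u' : T.b (T.s j) x2 - T.b g x2 ≠ T.b g x3 := by
    simpa [IMap, h12.symm, h23.symm, h13.symm, Ne.symm hgx2, Ne.symm hgx3] using h2u
  have hv2 := T.weave_val j g hg x2 hx2
  have hv3 := T.weave_val j g hg x3 hx3
  have key : T.b g x3 = T.b g x2 := by
    rcases hv2 with hv2 | hv2 <;> rcases hv3 with hv3 | hv3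
    · rw [hv2, hv3]
    · exact absurd (by rw [hv3, ← hss, hv2, sub_zero]) (Ne.symm h2u')
    · exact absurd (by rw [hv3, hv2, sub_self]) (Ne.symm h2u')
    · rw [hv2, hv3, hss]
  obtain ⟨hA, hB⟩ := h1
  refine ⟨⟨by rw [key]; exact hA, by rw [← hss]; exact hB⟩, ?_⟩
  funext a a'
  by_cases ha : a = g
  · subst ha
    by_cases h1' : a' = x1
    · subst h1'
      simp [IMap, h12, h13, Ne.symm hgx1]
    by_cases h2' : a' = x2
    · subst h2'
      simp only [IMap, h12.symm, h23, Ne.symm hgx2, hgx2]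
      simp [hsg]
    by_cases h3' : a' = x3
    · subst h3'
      simp [IMap, h13.symm, h23.symm, Ne.symm hgx3, hsg]
    · simp [IMap, h1', h2', h3', hgx1, hgx2, hgx3]
  · by_cases ha' : a' = g
    · subst ha'
      by_cases h1' : a = x1
      · subst h1'
        simp [IMap, h12, h13, Ne.symm hgx1]
      by_cases h2' : a = x2
      · subst h2'
        simp only [IMap, h12.symm, h23, Ne.symm hgx2, hgx2]
        simp [hsg]
      by_cases h3' : a = x3
      · subst h3'
        simp [IMap, h13.symm, h23.symm, Ne.symm hgx3, hsg]
      · simp [IMap, h1', h2', h3', hgx1, hgx2, hgx3, ha]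
    · simp [IMap, ha, ha']
end

section
/- Let T be a woven based matrix over an abelian group H, let g ∈ G_j\{s_j}, □ ∈ {1,2}, and let x_1,x_2 ∈ I be distinct. If the intersection move I_□(g;x_1,x_2) is applicable to T with result T_1, then the same move I_□(g;x_1,x_2) is applicable to T_1, and applying it to T_1 returns T. In particular, I_□ is an involution when applied to the same triple of elements. -/
universe u v

variable {α : Type u} {H : Type v} [DecidableEq α] [AddCommGroup H] {n : ℕ}

/-- each intersection move `I_□(g;x₁,x₂)` is an involution: it is applicable
to its own result and applying it twice returns the original woven based matrix. -/
theorem intersection_move_involution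
    {α : Type u} {H : Type v} [DecidableEq α] [AddCommGroup H] {n : ℕ}
    (T : WovenBasedMatrix α H n) (j : Fin n) (g x1 x2 : α)
    (hg : g ∈ T.G j) (hgs : g ≠ T.s j)
    (hx1 : x1 ∈ T.I) (hx2 : x2 ∈ T.I) (hx12 : x1 ≠ x2)
    (sq : Fin 2)
    (happ : MoveApplicable sq T.b (T.s j) g x1 x2) :
    MoveApplicable sq (IMap T.b (T.s j) g x1 x2) (T.s j) g x1 x2 ∧
    IMap (IMap T.b (T.s j) g x1 x2) (T.s j) g x1 x2 = T.b := by
  have hgI : g ∉ T.I := Finset.disjoint_left.mp (T.disjointI j) hg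
  have hsI : T.s j ∉ T.I := Finset.disjoint_left.mp (T.disjointI j) (T.s_mem j)
  have hgx1 : g ≠ x1 := fun h => hgI (h ▸ hx1)
  have hgx2 : g ≠ x2 := fun h => hgI (h ▸ hx2)
  have hsx1 : T.s j ≠ x1 := fun h => hsI (h ▸ hx1)
  have hsx2 : T.s j ≠ x2 := fun h => hsI (h ▸ hx2)
  set b := T.b with hb
  set sj := T.s j with hsj
  have hvg1 : IMap b sj g x1 x2 g x1 = b sj x1 - b g x1 := by simp [IMap]
  have hvg2 : IMap b sj g x1 x2 g x2 = b sj x2 - b g x2 := by simp [IMap]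
  have hvs1 : IMap b sj g x1 x2 sj x1 = b sj x1 := by
    simp [IMap, Ne.symm hgs, hsx1, hsx2, Ne.symm hgx1]
  have hvs2 : IMap b sj g x1 x2 sj x2 = b sj x2 := by
    simp [IMap, Ne.symm hgs, hsx1, hsx2, Ne.symm hgx2]
  have hv1s : IMap b sj g x1 x2 x1 sj = b x1 sj := by
    simp [IMap, Ne.symm hgx1, Ne.symm hgs]
  have hv2s : IMap b sj g x1 x2 x2 sj = b x2 sj := by
    simp [IMap, Ne.symm hgx2, Ne.symm hgs]
  have hv1g : IMap b sj g x1 x2 x1 g = b x1 sj - b x1 g := by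
    simp [IMap, Ne.symm hgx1]
  have hv2g : IMap b sj g x1 x2 x2 g = b x2 sj - b x2 g := by
    simp [IMap, Ne.symm hgx2]
  constructor
  · unfold MoveApplicable at happ ⊢
    split at happ <;> rename_i hk <;> simp only [hk, if_true] <;> try simp only [if_neg hk]
    · obtain ⟨h1, h2⟩ := happ
      refine ⟨?_, ?_⟩
      · rw [hvg1, hvg2, sub_add_sub_comm, h1, h2, sub_zero]
      · rw [hvs1, hvs2]; exact h2
    · obtain ⟨h1, h2⟩ := happ
      refine ⟨?_, ?_⟩
      · rw [hvg1, hvg2, h2]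
        intro h
        exact h1 (sub_right_injective h)
      · rw [hvs1, hvs2]; exact h2
  · funext a a'
    by_cases h1 : a = g ∧ (a' = x1 ∨ a' = x2)
    · have : IMap (IMap b sj g x1 x2) sj g x1 x2 a a' =
          IMap b sj g x1 x2 sj a' - IMap b sj g x1 x2 a a' := by
        simp only [IMap]; rw [if_pos h1]
      rw [this, h1.1]
      rcases h1.2 with h | h <;> rw [h]
      · rw [hvs1, hvg1]; abel
      · rw [hvs2, hvg2]; abel
    · by_cases h2 : a' = g ∧ (a = x1 ∨ a = x2)
      · have : IMap (IMap b sj g x1 x2) sj g x1 x2 a a' =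
            IMap b sj g x1 x2 a sj - IMap b sj g x1 x2 a a' := by
          simp only [IMap]; rw [if_neg h1, if_pos h2]
        rw [this, h2.1]
        rcases h2.2 with h | h <;> rw [h]
        · rw [hv1s, hv1g]; abel
        · rw [hv2s, hv2g]; abel
      · simp only [IMap, if_neg h1, if_neg h2]
end

section
/- Let T be a woven based matrix over an abelian group H and let g_1,g_2 ∈ G_i\{s_i} be a G_i-complementary pair in T. Let N = I_{n_k}(g_1;x_k,x_k')∘⋯∘I_{n_1}(g_1;x_1,x_1'), with each n_m ∈ {1,2}, be a finite sequence of intersection moves acting on g_1 that is applicable to T, with result T'. Then the sequence N' = I_{n_k}(g_2;x_k,x_k')∘⋯∘I_{n_1}(g_2;x_1,x_1') (the same moves applied to g_2) is applicable to T', and in the resulting woven based matrix the elements g_1 and g_2 are again G_i-complementary. -/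
universe u v

variable {α : Type u} {H : Type v} [DecidableEq α] [AddCommGroup H] {n : ℕ}

/-!
Since `b g₁ + b g₂ = b sᵢ` row by row, a `g₁`-annihilating (resp. `g₁`-unequal) pair is also
`g₂`-annihilating (resp. `g₂`-unequal). A move on `g₂` leaves the rows of `g₁` and `sᵢ`
untouched and commutes with every move on `g₁`, so the two sequences may be interleaved into
consecutive pairs `I(g₂; x, x') ∘ I(g₁; x, x')`. Each such pair replaces `b gₖ x` by
`b sᵢ x - b gₖ x` for both `k` and so preserves `b g₁ + b g₂ = b sᵢ`.
-/

namespace IMap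

variable {b : α → α → H} {s g x1 x2 : α}

theorem row_of_not_mem {c : α} {X : Set α} (hcg : c ≠ g) (hcX : c ∉ X) (hx1 : x1 ∈ X)
    (hx2 : x2 ∈ X) : IMap b s g x1 x2 c = b c := by
  funext a'
  simp [IMap, hcg, (ne_of_mem_of_not_mem hx1 hcX).symm,
    (ne_of_mem_of_not_mem hx2 hcX).symm]

theorem apply_self_of_mem {a : α} (ha : a = x1 ∨ a = x2) :
    IMap b s g x1 x2 g a = b s a - b g a := by
  simp [IMap, ha]

theorem apply_self_of_ne {a : α} (hg1 : g ≠ x1) (hg2 : g ≠ x2) (ha1 : a ≠ x1) (ha2 : a ≠ x2) :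
    IMap b s g x1 x2 g a = b g a := by
  simp [IMap, hg1, hg2, ha1, ha2]

theorem comm (b : α → α → H) {g' y1 y2 : α} {X : Set α} (hgg' : g ≠ g')
    (hsg : s ≠ g) (hsg' : s ≠ g') (hgX : g ∉ X) (hg'X : g' ∉ X) (hsX : s ∉ X)
    (hx1 : x1 ∈ X) (hx2 : x2 ∈ X) (hy1 : y1 ∈ X) (hy2 : y2 ∈ X) :
    IMap (IMap b s g x1 x2) s g' y1 y2 = IMap (IMap b s g' y1 y2) s g x1 x2 := by
  funext a a'
  simp only [IMap]
  split_ifs <;> grind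

end IMap

theorem IMap_IMap_complementary {b : α → α → H} {s g1 g2 x1 x2 a : α} {X : Set α}
    (hg12 : g1 ≠ g2) (hsg1 : s ≠ g1) (hsg2 : s ≠ g2) (hg1X : g1 ∉ X) (hg2X : g2 ∉ X)
    (hsX : s ∉ X) (hx1 : x1 ∈ X) (hx2 : x2 ∈ X) (ha : b g1 a + b g2 a = b s a) :
    IMap (IMap b s g1 x1 x2) s g2 x1 x2 g1 a + IMap (IMap b s g1 x1 x2) s g2 x1 x2 g2 a =
      IMap (IMap b s g1 x1 x2) s g2 x1 x2 s a := by
  have hg1x1 := (ne_of_mem_of_not_mem hx1 hg1X).symm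
  have hg1x2 := (ne_of_mem_of_not_mem hx2 hg1X).symm
  have hg2x1 := (ne_of_mem_of_not_mem hx1 hg2X).symm
  have hg2x2 := (ne_of_mem_of_not_mem hx2 hg2X).symm
  rw [IMap.row_of_not_mem hg12 hg1X hx1 hx2, IMap.row_of_not_mem hsg2 hsX hx1 hx2,
    IMap.row_of_not_mem hsg1 hsX hx1 hx2]
  by_cases hx : a = x1 ∨ a = x2
  · rw [IMap.apply_self_of_mem hx, IMap.apply_self_of_mem hx,
      IMap.row_of_not_mem hsg1 hsX hx1 hx2, IMap.row_of_not_mem hg12.symm hg2X hx1 hx2, ← ha]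
    abel
  · rw [not_or] at hx
    rw [IMap.apply_self_of_ne hg2x1 hg2x2 hx.1 hx.2, IMap.apply_self_of_ne hg1x1 hg1x2 hx.1 hx.2,
      IMap.row_of_not_mem hg12.symm hg2X hx1 hx2, ha]

theorem moveApplicable_congr {α : Type u} {H : Type v} [AddCommGroup H] {k : Fin 2}
    {b b' : α → α → H} {s g x1 x2 : α}
    (hg : b g = b' g) (hs : b s = b' s) :
    MoveApplicable k b s g x1 x2 ↔ MoveApplicable k b' s g x1 x2 := by
  simp only [MoveApplicable, IsGAnn, IsGUnequal, hg, hs]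

theorem MoveApplicable.of_complementary {α : Type u} {H : Type v} [AddCommGroup H]
    {k : Fin 2} {b : α → α → H} {s g1 g2 x1 x2 : α}
    (h1 : b g1 x1 + b g2 x1 = b s x1) (h2 : b g1 x2 + b g2 x2 = b s x2)
    (h : MoveApplicable k b s g1 x1 x2) : MoveApplicable k b s g2 x1 x2 := by
  unfold MoveApplicable IsGAnn IsGUnequal at *
  rw [eq_sub_of_add_eq' h1, eq_sub_of_add_eq' h2]
  split_ifs at h ⊢
  · obtain ⟨hg, hs⟩ := h
    exact ⟨by rw [sub_add_sub_comm, hs, hg, sub_zero], hs⟩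
  · obtain ⟨hg, hs⟩ := h
    exact ⟨fun h => hg (by rw [hs] at h; exact sub_right_injective h), hs⟩

def MoveDatum.IsOn (m : MoveDatum α n) (i : Fin n) (g : α) (X : Set α) : Prop :=
  m.j = i ∧ m.g = g ∧ m.x1 ∈ X ∧ m.x2 ∈ X

section applyMoves

variable (s : Fin n → α) {i : Fin n} {g : α} {X : Set α} {L : List (MoveDatum α n)}

theorem applyMoves_row (hL : ∀ m ∈ L, m.IsOn i g X) {c : α} (hcg : c ≠ g) (hcX : c ∉ X)
    (b : α → α → H) : applyMoves s L b c = b c := by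
  induction L generalizing b with
  | nil => rfl
  | cons m L ih =>
    obtain ⟨-, rfl, hx1, hx2⟩ := hL m List.mem_cons_self
    rw [applyMoves, ih (fun m hm => hL m (List.mem_cons_of_mem _ hm)),
      IMap.row_of_not_mem hcg hcX hx1 hx2]

theorem IMap_applyMoves_comm (hL : ∀ m ∈ L, m.IsOn i g X) {g' y1 y2 : α} (hgg' : g ≠ g')
    (hsg : s i ≠ g) (hsg' : s i ≠ g') (hgX : g ∉ X) (hg'X : g' ∉ X) (hsX : s i ∉ X)
    (hy1 : y1 ∈ X) (hy2 : y2 ∈ X) (b : α → α → H) :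
    IMap (applyMoves s L b) (s i) g' y1 y2 = applyMoves s L (IMap b (s i) g' y1 y2) := by
  induction L generalizing b with
  | nil => rfl
  | cons m L ih =>
    obtain ⟨j, sq, g, x1, x2⟩ := m
    obtain ⟨rfl, rfl, hx1, hx2⟩ := hL _ List.mem_cons_self
    rw [applyMoves, applyMoves, ih (fun m hm => hL m (List.mem_cons_of_mem _ hm)),
      IMap.comm b hgg' hsg hsg' hgX hg'X hsX hx1 hx2 hy1 hy2]

theorem movesApplicable_IMap_iff (hL : ∀ m ∈ L, m.IsOn i g X) {g' y1 y2 : α} (hgg' : g ≠ g')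
    (hsg : s i ≠ g) (hsg' : s i ≠ g') (hgX : g ∉ X) (hg'X : g' ∉ X) (hsX : s i ∉ X)
    (hy1 : y1 ∈ X) (hy2 : y2 ∈ X) (b : α → α → H) :
    movesApplicable s L (IMap b (s i) g' y1 y2) ↔ movesApplicable s L b := by
  induction L generalizing b with
  | nil => rfl
  | cons m L ih =>
    obtain ⟨j, sq, g, x1, x2⟩ := m
    obtain ⟨rfl, rfl, hx1, hx2⟩ := hL _ List.mem_cons_self
    simp only [movesApplicable]
    rw [moveApplicable_congr (IMap.row_of_not_mem hgg' hgX hy1 hy2)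
        (IMap.row_of_not_mem hsg' hsX hy1 hy2),
      ← IMap.comm b hgg' hsg hsg' hgX hg'X hsX hx1 hx2 hy1 hy2,
      ih (fun m hm => hL m (List.mem_cons_of_mem _ hm))]

end applyMoves

theorem applyMoves_map_complementary (s : Fin n → α) (i : Fin n) {g1 g2 : α} {X C : Set α}
    (hg12 : g1 ≠ g2) (hsg1 : s i ≠ g1) (hsg2 : s i ≠ g2) (hg1X : g1 ∉ X) (hg2X : g2 ∉ X)
    (hsX : s i ∉ X) (hXC : X ⊆ C) {L : List (MoveDatum α n)} (hL : ∀ m ∈ L, m.IsOn i g1 X)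
    {b : α → α → H} (hcomp : ∀ a ∈ C, b g1 a + b g2 a = b (s i) a)
    (happ : movesApplicable s L b) :
    movesApplicable s (L.map fun m => { m with g := g2 }) (applyMoves s L b) ∧
      ∀ a ∈ C,
        applyMoves s (L.map fun m => { m with g := g2 }) (applyMoves s L b) g1 a +
          applyMoves s (L.map fun m => { m with g := g2 }) (applyMoves s L b) g2 a =
          applyMoves s (L.map fun m => { m with g := g2 }) (applyMoves s L b) (s i) a := by
  induction L generalizing b with
  | nil => exact ⟨trivial, hcomp⟩
  | cons m L ih =>
    obtain ⟨j, sq, g, x1, x2⟩ := m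
    obtain ⟨rfl, rfl, hx1, hx2⟩ := hL _ List.mem_cons_self
    have hLtail : ∀ m ∈ L, m.IsOn j g X := fun m hm => hL m (List.mem_cons_of_mem _ hm)
    obtain ⟨happ₁, happL⟩ := happ
    simp only [List.map_cons, applyMoves, movesApplicable]
    set b₁ := IMap b (s j) g x1 x2
    set b₂ := IMap b₁ (s j) g2 x1 x2
    have hcomm : IMap (applyMoves s L b₁) (s j) g2 x1 x2 = applyMoves s L b₂ :=
      IMap_applyMoves_comm s hLtail hg12 hsg1 hsg2 hg1X hg2X hsX hx1 hx2 b₁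
    have hcomp₂ : ∀ a ∈ C, b₂ g a + b₂ g2 a = b₂ (s j) a := fun a ha =>
      IMap_IMap_complementary hg12 hsg1 hsg2 hg1X hg2X hsX hx1 hx2 (hcomp a ha)
    have happ₂ : movesApplicable s L b₂ :=
      (movesApplicable_IMap_iff s hLtail hg12 hsg1 hsg2 hg1X hg2X hsX hx1 hx2 b₁).2 happL
    have hhead : MoveApplicable sq (applyMoves s L b₁) (s j) g2 x1 x2 := by
      rw [moveApplicable_congr (applyMoves_row s hLtail hg12.symm hg2X b₁)
          (applyMoves_row s hLtail hsg1 hsX b₁),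
        moveApplicable_congr (IMap.row_of_not_mem hg12.symm hg2X hx1 hx2)
          (IMap.row_of_not_mem hsg1 hsX hx1 hx2)]
      exact happ₁.of_complementary (hcomp x1 (hXC hx1)) (hcomp x2 (hXC hx2))
    obtain ⟨ih₁, ih₂⟩ := ih hLtail hcomp₂ happ₂
    rw [hcomm]
    exact ⟨⟨hhead, ih₁⟩, ih₂⟩

/-- if `g₁, g₂` are a `G i`-complementary pair and a sequence of
intersection moves acting on `g₁` is applied, then the same sequence of moves applied
to `g₂` is applicable to the result, after which `g₁` and `g₂` are again
`G i`-complementary. -/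
theorem complementary_pair_matching_moves
    {α : Type u} {H : Type v} [DecidableEq α] [AddCommGroup H] {n : ℕ}
    (T : WovenBasedMatrix α H n) (i : Fin n) (g1 g2 : α)
    (hg1 : g1 ∈ T.G i) (hg1s : g1 ≠ T.s i)
    (hg2 : g2 ∈ T.G i) (hg2s : g2 ≠ T.s i) (hg12 : g1 ≠ g2)
    (hcomp : ∀ a ∈ T.carrier, T.b g1 a + T.b g2 a = T.b (T.s i) a)
    (L : List (MoveDatum α n))
    (hL : ∀ m ∈ L, m.j = i ∧ m.g = g1 ∧ m.x1 ∈ T.I ∧ m.x2 ∈ T.I ∧ m.x1 ≠ m.x2)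
    (happ : movesApplicable T.s L T.b) :
    movesApplicable T.s (L.map fun m => { m with g := g2 }) (applyMoves T.s L T.b) ∧
    (∀ a ∈ T.carrier,
      applyMoves T.s (L.map fun m => { m with g := g2 }) (applyMoves T.s L T.b) g1 a +
        applyMoves T.s (L.map fun m => { m with g := g2 }) (applyMoves T.s L T.b) g2 a =
        applyMoves T.s (L.map fun m => { m with g := g2 }) (applyMoves T.s L T.b)
          (T.s i) a) := by
  have hGI : ∀ c ∈ T.G i, c ∉ (T.I : Set α) := fun c hc =>
    Finset.disjoint_left.mp (T.disjointI i) hc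
  have hL' : ∀ m ∈ L, m.IsOn i g1 T.I := fun m hm =>
    let ⟨hj, hg, hx1, hx2, _⟩ := hL m hm
    ⟨hj, hg, hx1, hx2⟩
  exact applyMoves_map_complementary T.s i (C := T.carrier) hg12 hg1s.symm hg2s.symm
    (hGI g1 hg1) (hGI g2 hg2) (hGI _ (T.s_mem i)) (Finset.coe_subset.2 Finset.subset_union_right)
    hL' hcomp happ
end

section
/- Let T be a woven based matrix over an abelian group H. Any finite sequence N of intersection moves applicable to T can be replaced by an applicable sequence N_k∘⋯∘N_1 yielding the same resulting woven based matrix, such that: all intersection moves in N_m act on a common element g_m ∈ G, the elements g_1,…,g_k are pairwise distinct, and for each x ∈ I there is at most one move of N_m of the form I_□(g_m;x,·). Consequently, each N_m consists of at most ⌊#I/2⌋ intersection moves. -/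
universe u v

variable {α : Type u} {H : Type v} [DecidableEq α] [AddCommGroup H] {n : ℕ}

/-!
Two intersection moves commute, and neither changes whether the other is applicable, when they
act on different elements of `G` or on disjoint pairs of the weaving set. Two consecutive moves
on the same `g` sharing a weaving element either cancel (same pair) or merge into the single
move on the two remaining elements; the merged move is again applicable because every value
`b g x` stays in `{0, b (s j) x}`. Reducing the tail of a sequence first and then pushing its
first move past the blocks on other elements into the block on its own element (where it
commutes with, cancels or merges with each move it meets) produces the reduced sequence. The
moves of a block use pairwise disjoint pairs of `I`, so there are at most `⌊#I/2⌋` of them.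
-/

section IMapAlgebra

variable {b : α → α → H} {s s' g g' x y z x' y' : α}

theorem IMap_apply_of_ne {a a' : α} (h₁ : a ≠ g ∨ a' ≠ x ∧ a' ≠ y)
    (h₂ : a' ≠ g ∨ a ≠ x ∧ a ≠ y) : IMap b s g x y a a' = b a a' := by
  grind [IMap]

theorem IMap_apply_left (w : α) (hw : w = x ∨ w = y) :
    IMap b s g x y g w = b s w - b g w := by
  grind [IMap]

theorem IMap_swap : IMap b s g x y = IMap b s g y x := by
  funext a a'
  grind [IMap]

theorem IMap_IMap_swap (hgx : g ≠ x) (hgy : g ≠ y) (hsg : s ≠ g) :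
    IMap (IMap b s g x y) s g y x = b := by
  funext a a'
  simp only [IMap]
  split_ifs <;> grind

theorem IMap_IMap_trans (hxy : x ≠ y) (hxz : x ≠ z) (hyz : y ≠ z)
    (hgx : g ≠ x) (hgy : g ≠ y) (hgz : g ≠ z) (hsg : s ≠ g) :
    IMap (IMap b s g x y) s g y z = IMap b s g x z := by
  funext a a'
  simp only [IMap]
  split_ifs <;> grind

theorem IMap_comm (hgx' : g ≠ x') (hgy' : g ≠ y') (hg'x : g' ≠ x) (hg'y : g' ≠ y)
    (hsg' : s ≠ g') (hs'g : s' ≠ g)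
    (h : g ≠ g' ∨ s = s' ∧ [x, y].Disjoint [x', y']) :
    IMap (IMap b s g x y) s' g' x' y' = IMap (IMap b s' g' x' y') s g x y := by
  simp only [List.disjoint_cons_left, List.mem_cons, List.not_mem_nil, or_false,
    List.disjoint_nil_left, and_true, not_or] at h
  funext a a'
  simp only [IMap]
  split_ifs <;> grind

end IMapAlgebra

-- `uᵢ = b g xᵢ` and `cᵢ = b s xᵢ`; after the move on `x₁, x₂` the value at `x₂` is `c₂ - u₂`.
theorem annihilating_or_unequal_trans {u₁ u₂ u₃ c₁ c₂ c₃ : H}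
    (hu₁ : u₁ = 0 ∨ u₁ = c₁) (hu₂ : u₂ = 0 ∨ u₂ = c₂) (hu₃ : u₃ = 0 ∨ u₃ = c₃)
    (h₁₂ : u₁ + u₂ = 0 ∧ c₁ + c₂ = 0 ∨ u₁ ≠ u₂ ∧ c₁ = c₂)
    (h₂₃ : c₂ - u₂ + u₃ = 0 ∧ c₂ + c₃ = 0 ∨ c₂ - u₂ ≠ u₃ ∧ c₂ = c₃) :
    u₁ + u₃ = 0 ∧ c₁ + c₃ = 0 ∨ u₁ ≠ u₃ ∧ c₁ = c₃ := by
  grind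

section Applicability

variable {b : α → α → H} {s g x y z : α} {k : Fin 2}

omit [DecidableEq α] in
theorem moveApplicable_comm : MoveApplicable k b s g x y ↔ MoveApplicable k b s g y x := by
  unfold MoveApplicable IsGAnn IsGUnequal
  split_ifs <;> simp only [add_comm, eq_comm, ne_comm]

omit [DecidableEq α] in
theorem exists_moveApplicable_iff :
    (∃ k, MoveApplicable k b s g x y) ↔ IsGAnn b s g x y ∨ IsGUnequal b s g x y := by
  unfold MoveApplicable
  constructor
  · rintro ⟨k, hk⟩
    split_ifs at hk
    exacts [Or.inl hk, Or.inr hk]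
  · rintro (h | h)
    exacts [⟨0, by simpa using h⟩, ⟨1, by simpa using h⟩]

theorem exists_moveApplicable_trans (hxz : x ≠ z) (hyz : y ≠ z) (hgy : g ≠ y) (hgz : g ≠ z)
    (hsg : s ≠ g) (hwx : b g x = 0 ∨ b g x = b s x) (hwy : b g y = 0 ∨ b g y = b s y)
    (hwz : b g z = 0 ∨ b g z = b s z) {k₁ k₂ : Fin 2}
    (h₁ : MoveApplicable k₁ b s g x y) (h₂ : MoveApplicable k₂ (IMap b s g x y) s g y z) :
    ∃ k, MoveApplicable k b s g x z := by
  have hgy' : IMap b s g x y g y = b s y - b g y := IMap_apply_left y (Or.inr rfl)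
  have hgz' : IMap b s g x y g z = b g z :=
    IMap_apply_of_ne (Or.inr ⟨hxz.symm, hyz.symm⟩) (Or.inl hgz.symm)
  have hsy' : IMap b s g x y s y = b s y := IMap_apply_of_ne (Or.inl hsg) (Or.inl hgy.symm)
  have hsz' : IMap b s g x y s z = b s z := IMap_apply_of_ne (Or.inl hsg) (Or.inl hgz.symm)
  replace h₁ := exists_moveApplicable_iff.1 ⟨_, h₁⟩
  replace h₂ := exists_moveApplicable_iff.1 ⟨_, h₂⟩
  rw [exists_moveApplicable_iff]
  unfold IsGAnn IsGUnequal at h₁ h₂ ⊢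
  rw [hgy', hgz', hsy', hsz'] at h₂
  exact annihilating_or_unequal_trans hwx hwy hwz h₁ h₂

end Applicability

namespace MoveDatum

variable (m m' : MoveDatum α n)

def support : List α := [m.x1, m.x2]

def swap : MoveDatum α n := ⟨m.j, m.sq, m.g, m.x2, m.x1⟩

def act (s : Fin n → α) (b : α → α → H) : α → α → H := IMap b (s m.j) m.g m.x1 m.x2

def Applicable (s : Fin n → α) (b : α → α → H) : Prop :=
  MoveApplicable m.sq b (s m.j) m.g m.x1 m.x2

def Independent : Prop := m.g ≠ m'.g ∨ m.support.Disjoint m'.support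

variable {m m'}

omit [DecidableEq α] in
theorem mem_support {y : α} : y ∈ m.support ↔ m.x1 = y ∨ m.x2 = y := by
  simp [support, eq_comm]

omit [DecidableEq α] in
@[simp] theorem mem_support_swap {y : α} : y ∈ m.swap.support ↔ y ∈ m.support := by
  simp [support, swap, or_comm]

omit [DecidableEq α] in
@[simp] theorem g_swap : m.swap.g = m.g := rfl

@[simp] theorem act_swap (s : Fin n → α) (b : α → α → H) : m.swap.act s b = m.act s b :=
  IMap_swap.symm

omit [DecidableEq α] in
@[simp] theorem applicable_swap {s : Fin n → α} {b : α → α → H} :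
    m.swap.Applicable s b ↔ m.Applicable s b :=
  moveApplicable_comm.symm

omit [DecidableEq α] in
theorem Independent.symm (h : m.Independent m') : m'.Independent m :=
  h.imp Ne.symm List.disjoint_comm.1

end MoveDatum

theorem applyMoves_cons (s : Fin n → α) (m : MoveDatum α n) (L : List (MoveDatum α n))
    (b : α → α → H) : applyMoves s (m :: L) b = applyMoves s L (m.act s b) := rfl

theorem movesApplicable_cons {s : Fin n → α} {m : MoveDatum α n} {L : List (MoveDatum α n)}
    {b : α → α → H} :
    movesApplicable s (m :: L) b ↔ m.Applicable s b ∧ movesApplicable s L (m.act s b) :=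
  Iff.rfl

theorem applyMoves_append (s : Fin n → α) (L L' : List (MoveDatum α n)) (b : α → α → H) :
    applyMoves s (L ++ L') b = applyMoves s L' (applyMoves s L b) := by
  induction L generalizing b with
  | nil => rfl
  | cons m L ih => exact ih _

theorem movesApplicable_append {s : Fin n → α} {L L' : List (MoveDatum α n)} {b : α → α → H} :
    movesApplicable s (L ++ L') b ↔
      movesApplicable s L b ∧ movesApplicable s L' (applyMoves s L b) := by
  induction L generalizing b with
  | nil => simp [movesApplicable, applyMoves]
  | cons m L ih =>
    simp only [List.cons_append, movesApplicable_cons, ih, and_assoc, applyMoves_cons]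

namespace MoveDatum

variable {T : WovenBasedMatrix α H n} {m m' : MoveDatum α n}

theorem _root_.WovenBasedMatrix.index_eq_of_mem (T : WovenBasedMatrix α H n) {a : α}
    {i j : Fin n} (hi : a ∈ T.G i) (hj : a ∈ T.G j) : i = j := by
  by_contra h
  exact Finset.disjoint_left.mp (T.disjointG _ _ h) hi hj

theorem valid.mem_I (hm : m.valid T) {y : α} (hy : y ∈ m.support) : y ∈ T.I := by
  rcases mem_support.1 hy with rfl | rfl
  exacts [hm.2.2.1, hm.2.2.2.1]

theorem valid.g_ne_of_mem_I (hm : m.valid T) {x : α} (hx : x ∈ T.I) : m.g ≠ x := by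
  rintro rfl
  exact Finset.disjoint_left.mp (T.disjointI m.j) hm.1 hx

theorem valid.g_ne_s (hm : m.valid T) (j : Fin n) : m.g ≠ T.s j := by
  intro h
  obtain rfl | hj := eq_or_ne m.j j
  · exact hm.2.1 h
  · exact Finset.disjoint_left.mp (T.disjointG _ _ hj) hm.1 (h ▸ T.s_mem j)

theorem valid.j_eq_of_g_eq (hm : m.valid T) (hm' : m'.valid T) (h : m.g = m'.g) :
    m.j = m'.j :=
  T.index_eq_of_mem hm.1 (h ▸ hm'.1)

theorem valid.swap (hm : m.valid T) : m.swap.valid T :=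
  ⟨hm.1, hm.2.1, hm.2.2.2.1, hm.2.2.1, hm.2.2.2.2.symm⟩

theorem act_comm (hm : m.valid T) (hm' : m'.valid T) (h : m.Independent m') (b : α → α → H) :
    m'.act T.s (m.act T.s b) = m.act T.s (m'.act T.s b) := by
  refine IMap_comm (hm.g_ne_of_mem_I hm'.2.2.1) (hm.g_ne_of_mem_I hm'.2.2.2.1)
    (hm'.g_ne_of_mem_I hm.2.2.1) (hm'.g_ne_of_mem_I hm.2.2.2.1) (hm'.g_ne_s _).symm
    (hm.g_ne_s _).symm ?_
  by_cases hg : m.g = m'.g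
  · exact Or.inr ⟨congrArg T.s (hm.j_eq_of_g_eq hm' hg), h.resolve_left (not_not.2 hg)⟩
  · exact Or.inl hg

omit [DecidableEq α] in
theorem applicable_congr {s : Fin n → α} {b b' : α → α → H}
    (h : ∀ y ∈ m.support, b m.g y = b' m.g y ∧ b (s m.j) y = b' (s m.j) y) :
    m.Applicable s b ↔ m.Applicable s b' := by
  obtain ⟨h₁, h₁'⟩ := h m.x1 (mem_support.2 (Or.inl rfl))
  obtain ⟨h₂, h₂'⟩ := h m.x2 (mem_support.2 (Or.inr rfl))
  simp only [Applicable, MoveApplicable, IsGAnn, IsGUnequal, h₁, h₁', h₂, h₂']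

theorem applicable_act_iff (hm : m.valid T) (hm' : m'.valid T) (h : m.Independent m')
    {b : α → α → H} : m'.Applicable T.s (m.act T.s b) ↔ m'.Applicable T.s b := by
  refine applicable_congr fun y hy => ?_
  have hyg : y ≠ m.g := (hm.g_ne_of_mem_I (hm'.mem_I hy)).symm
  refine ⟨IMap_apply_of_ne ?_ (Or.inl hyg),
    IMap_apply_of_ne (Or.inl (hm.g_ne_s _).symm) (Or.inl hyg)⟩
  rcases h with h | h
  · exact Or.inl (Ne.symm h)
  · exact Or.inr (by simpa [mem_support, not_or, eq_comm] using fun hy' => h hy' hy)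

end MoveDatum

section Sequences

variable {T : WovenBasedMatrix α H n} {m : MoveDatum α n} {L : List (MoveDatum α n)}

theorem applyMoves_act_comm (hm : m.valid T) (hL : ∀ m' ∈ L, m'.valid T ∧ m.Independent m')
    (b : α → α → H) : applyMoves T.s L (m.act T.s b) = m.act T.s (applyMoves T.s L b) := by
  induction L generalizing b with
  | nil => rfl
  | cons m' L ih =>
    obtain ⟨hm', hmm'⟩ := hL m' List.mem_cons_self
    rw [applyMoves_cons, applyMoves_cons, MoveDatum.act_comm hm hm' hmm',
      ih fun m'' h => hL m'' (List.mem_cons_of_mem _ h)]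

theorem movesApplicable_act_iff (hm : m.valid T)
    (hL : ∀ m' ∈ L, m'.valid T ∧ m.Independent m') {b : α → α → H} :
    movesApplicable T.s L (m.act T.s b) ↔ movesApplicable T.s L b := by
  induction L generalizing b with
  | nil => exact Iff.rfl
  | cons m' L ih =>
    obtain ⟨hm', hmm'⟩ := hL m' List.mem_cons_self
    rw [movesApplicable_cons, movesApplicable_cons, MoveDatum.act_comm hm hm' hmm',
      MoveDatum.applicable_act_iff hm hm' hmm',
      ih fun m'' h => hL m'' (List.mem_cons_of_mem _ h)]

theorem applicable_applyMoves_iff (hm : m.valid T)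
    (hL : ∀ m' ∈ L, m'.valid T ∧ m.Independent m') {b : α → α → H} :
    m.Applicable T.s (applyMoves T.s L b) ↔ m.Applicable T.s b := by
  induction L generalizing b with
  | nil => exact Iff.rfl
  | cons m' L ih =>
    obtain ⟨hm', hmm'⟩ := hL m' List.mem_cons_self
    rw [applyMoves_cons, ih fun m'' h => hL m'' (List.mem_cons_of_mem _ h),
      MoveDatum.applicable_act_iff hm' hm hmm'.symm]

end Sequences

def WeaveValued (T : WovenBasedMatrix α H n) (b : α → α → H) : Prop :=
  ∀ j, ∀ g ∈ T.G j, ∀ x ∈ T.I, b g x = 0 ∨ b g x = b (T.s j) x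

namespace WeaveValued

variable {T : WovenBasedMatrix α H n} {b : α → α → H}

theorem act (hb : WeaveValued T b) {m : MoveDatum α n} (hm : m.valid T) :
    WeaveValued T (m.act T.s b) := by
  intro j g hg x hx
  have hxg : x ≠ m.g := (hm.g_ne_of_mem_I hx).symm
  have hs : m.act T.s b (T.s j) x = b (T.s j) x :=
    IMap_apply_of_ne (Or.inl (hm.g_ne_s j).symm) (Or.inl hxg)
  rw [hs]
  by_cases hgx : g = m.g ∧ (x = m.x1 ∨ x = m.x2)
  · obtain ⟨rfl, hx'⟩ := hgx
    obtain rfl := T.index_eq_of_mem hg hm.1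
    rw [MoveDatum.act, IMap_apply_left x hx']
    rcases hb _ _ hg x hx with h | h <;> simp [h]
  · rw [MoveDatum.act, IMap_apply_of_ne (by tauto) (Or.inl hxg)]
    exact hb j g hg x hx

theorem applyMoves (hb : WeaveValued T b) {L : List (MoveDatum α n)}
    (hL : ∀ m ∈ L, m.valid T) : WeaveValued T (applyMoves T.s L b) := by
  induction L generalizing b with
  | nil => exact hb
  | cons m L ih =>
    exact ih (hb.act (hL m List.mem_cons_self)) fun m' h => hL m' (List.mem_cons_of_mem _ h)

end WeaveValued

namespace MoveDatum

variable {T : WovenBasedMatrix α H n} {b : α → α → H} {m m' : MoveDatum α n}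

theorem cancel_or_merge_of_x2_eq_x1 (hm : m.valid T) (hm' : m'.valid T) (hg : m'.g = m.g)
    (hw : WeaveValued T b) (h : m.Applicable T.s b) (h' : m'.Applicable T.s (m.act T.s b))
    (hx : m.x2 = m'.x1) :
    m'.act T.s (m.act T.s b) = b ∨
      ∃ m'' : MoveDatum α n, m''.valid T ∧ m''.g = m.g ∧ m''.Applicable T.s b ∧
        m'.act T.s (m.act T.s b) = m''.act T.s b ∧
        ∀ y ∈ m''.support, y ∈ m.support ∨ y ∈ m'.support := by
  have hj : m'.j = m.j := T.index_eq_of_mem hm'.1 (hg ▸ hm.1)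
  have hact : ∀ c : α → α → H, m'.act T.s c = IMap c (T.s m.j) m.g m.x2 m'.x2 := by
    intro c
    rw [act, hj, hg, hx]
  have hgI : ∀ {w}, w ∈ T.I → m.g ≠ w := hm.g_ne_of_mem_I
  have hsg : T.s m.j ≠ m.g := (hm.g_ne_s m.j).symm
  have hw' : ∀ {w}, w ∈ T.I → b m.g w = 0 ∨ b m.g w = b (T.s m.j) w := hw m.j m.g hm.1 _
  by_cases hxz : m.x1 = m'.x2
  · left
    rw [hact, act, ← hxz]
    exact IMap_IMap_swap (hgI hm.2.2.1) (hgI hm.2.2.2.1) hsg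
  · right
    have hyz : m.x2 ≠ m'.x2 := hx ▸ hm'.2.2.2.2
    have h'' : MoveApplicable m'.sq (IMap b (T.s m.j) m.g m.x1 m.x2) (T.s m.j) m.g m.x2 m'.x2 :=
      by simpa only [Applicable, act, hj, hg, hx] using h'
    obtain ⟨k, hk⟩ := exists_moveApplicable_trans hxz hyz (hgI hm.2.2.2.1) (hgI hm'.2.2.2.1) hsg
      (hw' hm.2.2.1) (hw' hm.2.2.2.1) (hw' hm'.2.2.2.1) h h''
    refine ⟨⟨m.j, k, m.g, m.x1, m'.x2⟩, ⟨hm.1, hm.2.1, hm.2.2.1, hm'.2.2.2.1, hxz⟩, rfl, hk,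
      ?_, ?_⟩
    · rw [hact]
      exact IMap_IMap_trans hm.2.2.2.2 hxz hyz (hgI hm.2.2.1) (hgI hm.2.2.2.1)
        (hgI hm'.2.2.2.1) hsg
    · simp only [mem_support]
      tauto

theorem cancel_or_merge (hm : m.valid T) (hm' : m'.valid T) (hg : m'.g = m.g)
    (hw : WeaveValued T b) (h : m.Applicable T.s b) (h' : m'.Applicable T.s (m.act T.s b))
    {x : α} (hx : x ∈ m.support) (hx' : x ∈ m'.support) :
    m'.act T.s (m.act T.s b) = b ∨
      ∃ m'' : MoveDatum α n, m''.valid T ∧ m''.g = m.g ∧ m''.Applicable T.s b ∧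
        m'.act T.s (m.act T.s b) = m''.act T.s b ∧
        ∀ y ∈ m''.support, y ∈ m.support ∨ y ∈ m'.support := by
  rcases mem_support.1 hx with rfl | rfl <;> rcases mem_support.1 hx' with hx' | hx'
  · simpa using cancel_or_merge_of_x2_eq_x1 (m := m.swap) hm.swap hm' hg hw
      (applicable_swap.2 h) (by rwa [act_swap]) hx'.symm
  · simpa using cancel_or_merge_of_x2_eq_x1 (m := m.swap) (m' := m'.swap) hm.swap hm'.swap hg
      hw (applicable_swap.2 h) (by rwa [act_swap, applicable_swap]) hx'.symm
  · exact cancel_or_merge_of_x2_eq_x1 hm hm' hg hw h h' hx'.symm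
  · simpa using cancel_or_merge_of_x2_eq_x1 (m' := m'.swap) hm hm'.swap hg hw
      h (by rwa [applicable_swap]) hx'.symm

end MoveDatum

def IsReducedBlock (T : WovenBasedMatrix α H n) (g : α) (B : List (MoveDatum α n)) : Prop :=
  (∀ m ∈ B, m.valid T ∧ m.g = g) ∧ (B.flatMap MoveDatum.support).Nodup

def IsReducedSequence (T : WovenBasedMatrix α H n) (Bs : List (List (MoveDatum α n))) : Prop :=
  (∀ B ∈ Bs, ∃ g, IsReducedBlock T g B) ∧
    Bs.Pairwise fun B B' => ∀ m ∈ B, ∀ m' ∈ B', m.g ≠ m'.g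

section Reduction

variable {T : WovenBasedMatrix α H n} {b : α → α → H} {m : MoveDatum α n}

theorem isReducedBlock_singleton (hm : m.valid T) : IsReducedBlock T m.g [m] :=
  ⟨by simp [hm], by simpa [MoveDatum.support] using hm.2.2.2.2⟩

theorem isReducedBlock_cons {g : α} {m₀ : MoveDatum α n} {B : List (MoveDatum α n)} :
    IsReducedBlock T g (m₀ :: B) ↔ (m₀.valid T ∧ m₀.g = g) ∧ m₀.support.Nodup ∧
      (∀ a ∈ m₀.support, ∀ c ∈ B.flatMap MoveDatum.support, a ≠ c) ∧ IsReducedBlock T g B := by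
  simp only [IsReducedBlock, List.forall_mem_cons, List.flatMap_cons, List.nodup_append]
  tauto

theorem exists_reducedBlock_cons (hm : m.valid T) (hw : WeaveValued T b)
    (h : m.Applicable T.s b) {B : List (MoveDatum α n)} (hB : IsReducedBlock T m.g B)
    (hBa : movesApplicable T.s B (m.act T.s b)) :
    ∃ B', IsReducedBlock T m.g B' ∧
      (∀ y ∈ B'.flatMap MoveDatum.support,
        y ∈ m.support ∨ y ∈ B.flatMap MoveDatum.support) ∧
      movesApplicable T.s B' b ∧ applyMoves T.s B' b = applyMoves T.s B (m.act T.s b) := by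
  induction B generalizing m b with
  | nil => exact ⟨[m], isReducedBlock_singleton hm, by simp, ⟨h, trivial⟩, rfl⟩
  | cons m₀ Q ih =>
    obtain ⟨h₀, hQa⟩ := movesApplicable_cons.1 hBa
    obtain ⟨⟨hm₀, hg₀⟩, hn₀, hsep₀, hQ⟩ := isReducedBlock_cons.1 hB
    by_cases hd : m.support.Disjoint m₀.support
    · have hind : m.Independent m₀ := Or.inr hd
      obtain ⟨Q', hQ', hQ's, hQ'a, hQ'e⟩ := ih hm (hw.act hm₀)
        ((MoveDatum.applicable_act_iff hm₀ hm hind.symm).2 h) hQ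
        (by rwa [← MoveDatum.act_comm hm hm₀ hind])
      refine ⟨m₀ :: Q', isReducedBlock_cons.2 ⟨⟨hm₀, hg₀⟩, hn₀, fun a ha c hc => ?_, hQ'⟩, ?_,
        ⟨(MoveDatum.applicable_act_iff hm hm₀ hind).1 h₀, hQ'a⟩, ?_⟩
      · rcases hQ's c hc with hc | hc
        · exact fun e => hd hc (e ▸ ha)
        · exact hsep₀ a ha c hc
      · simp only [List.flatMap_cons, List.mem_append]
        rintro y (hy | hy)
        · exact Or.inr (Or.inl hy)
        · exact (hQ's y hy).imp_right Or.inr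
      · rw [applyMoves_cons, hQ'e, ← MoveDatum.act_comm hm hm₀ hind, applyMoves_cons]
    · obtain ⟨x, hx, hx₀⟩ : ∃ x ∈ m.support, x ∈ m₀.support := by
        by_contra hc
        exact hd fun x hx hx₀ => hc ⟨x, hx, hx₀⟩
      rcases MoveDatum.cancel_or_merge hm hm₀ hg₀ hw h h₀ hx hx₀ with
        hc | ⟨m', hm', hg', h', he, hs⟩
      · refine ⟨Q, hQ, fun y hy => Or.inr (List.mem_append_right _ hy), hc ▸ hQa, ?_⟩
        rw [applyMoves_cons, hc]
      · obtain ⟨Q', hQ', hQ's, hQ'a, hQ'e⟩ := ih hm' hw h' (hg'.symm ▸ hQ) (he ▸ hQa)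
        refine ⟨Q', hg' ▸ hQ', fun y hy => ?_, hQ'a, hQ'e.trans (he ▸ rfl)⟩
        rcases hQ's y hy with hy | hy
        · exact (hs y hy).imp_right fun hy => List.mem_append_left _ hy
        · exact Or.inr (List.mem_append_right _ hy)

theorem isReducedSequence_cons {B : List (MoveDatum α n)} {Bs : List (List (MoveDatum α n))} :
    IsReducedSequence T (B :: Bs) ↔ (∃ g, IsReducedBlock T g B) ∧
      (∀ m ∈ B, ∀ m' ∈ Bs.flatten, m.g ≠ m'.g) ∧ IsReducedSequence T Bs := by
  simp only [IsReducedSequence, List.forall_mem_cons, List.pairwise_cons, List.mem_flatten]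
  constructor
  · rintro ⟨⟨hB, hBs⟩, hsep, hP⟩
    exact ⟨hB, fun m hm m' ⟨B', hB', hm'⟩ => hsep B' hB' m hm m' hm', hBs, hP⟩
  · rintro ⟨hB, hsep, hBs, hP⟩
    exact ⟨⟨hB, hBs⟩, fun B' hB' m hm m' hm' => hsep m hm m' ⟨B', hB', hm'⟩, hP⟩

theorem exists_reducedSequence_cons_of_head (hm : m.valid T) (hw : WeaveValued T b)
    (h : m.Applicable T.s b) {B : List (MoveDatum α n)} {Bs : List (List (MoveDatum α n))}
    (hBs : IsReducedSequence T (B :: Bs)) {m₀ : MoveDatum α n} (hm₀ : m₀ ∈ B)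
    (hg₀ : m₀.g = m.g) (hBa : movesApplicable T.s (B :: Bs).flatten (m.act T.s b)) :
    ∃ Bs', IsReducedSequence T Bs' ∧
      (∀ m' ∈ Bs'.flatten, m'.g = m.g ∨ ∃ m'' ∈ (B :: Bs).flatten, m''.g = m'.g) ∧
      movesApplicable T.s Bs'.flatten b ∧
      applyMoves T.s Bs'.flatten b = applyMoves T.s (B :: Bs).flatten (m.act T.s b) := by
  obtain ⟨⟨g, hB⟩, hsep, hBs⟩ := isReducedSequence_cons.1 hBs
  obtain rfl : g = m.g := (hB.1 m₀ hm₀).2.symm.trans hg₀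
  rw [List.flatten_cons, movesApplicable_append] at hBa
  obtain ⟨B', hB', -, hB'a, hB'e⟩ := exists_reducedBlock_cons hm hw h hB hBa.1
  refine ⟨B' :: Bs, isReducedSequence_cons.2 ⟨⟨m.g, hB'⟩, ?_, hBs⟩, ?_, ?_, ?_⟩
  · intro m₁ hm₁ m₂ hm₂
    rw [(hB'.1 m₁ hm₁).2, ← hg₀]
    exact hsep m₀ hm₀ m₂ hm₂
  · intro m' hm'
    rcases List.mem_append.1 (List.flatten_cons ▸ hm') with hm' | hm'
    · exact Or.inl (hB'.1 m' hm').2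
    · exact Or.inr ⟨m', List.flatten_cons ▸ List.mem_append_right _ hm', rfl⟩
  · rw [List.flatten_cons, movesApplicable_append, hB'e]
    exact ⟨hB'a, hBa.2⟩
  · rw [List.flatten_cons, applyMoves_append, hB'e, List.flatten_cons, applyMoves_append]

theorem exists_reducedSequence_cons (hm : m.valid T) (hw : WeaveValued T b)
    (h : m.Applicable T.s b) {Bs : List (List (MoveDatum α n))} (hBs : IsReducedSequence T Bs)
    (hBa : movesApplicable T.s Bs.flatten (m.act T.s b)) :
    ∃ Bs', IsReducedSequence T Bs' ∧
      (∀ m' ∈ Bs'.flatten, m'.g = m.g ∨ ∃ m'' ∈ Bs.flatten, m''.g = m'.g) ∧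
      movesApplicable T.s Bs'.flatten b ∧
      applyMoves T.s Bs'.flatten b = applyMoves T.s Bs.flatten (m.act T.s b) := by
  induction Bs generalizing b with
  | nil =>
    exact ⟨[[m]], ⟨by simpa using ⟨m.g, isReducedBlock_singleton hm⟩, by simp⟩, by simp,
      ⟨h, trivial⟩, rfl⟩
  | cons B Bs ih =>
    by_cases hB : ∃ m₀ ∈ B, m₀.g = m.g
    · obtain ⟨m₀, hm₀, hg₀⟩ := hB
      exact exists_reducedSequence_cons_of_head hm hw h hBs hm₀ hg₀ hBa
    push Not at hB
    obtain ⟨⟨g, hBblock⟩, hsep, hBs⟩ := isReducedSequence_cons.1 hBs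
    have hind : ∀ m' ∈ B, m'.valid T ∧ m.Independent m' :=
      fun m' h' => ⟨(hBblock.1 m' h').1, Or.inl (hB m' h').symm⟩
    rw [List.flatten_cons, movesApplicable_append] at hBa
    obtain ⟨Bs', hBs', hg', hBs'a, hBs'e⟩ := ih (hw.applyMoves fun m' h' => (hind m' h').1)
      ((applicable_applyMoves_iff hm hind).2 h) hBs
      (by rw [← applyMoves_act_comm hm hind]; exact hBa.2)
    refine ⟨B :: Bs', isReducedSequence_cons.2 ⟨⟨g, hBblock⟩, ?_, hBs'⟩, ?_, ?_, ?_⟩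
    · intro m₁ hm₁ m₂ hm₂
      rcases hg' m₂ hm₂ with h₂ | ⟨m₃, hm₃, h₃⟩
      · rw [h₂]
        exact hB m₁ hm₁
      · rw [← h₃]
        exact hsep m₁ hm₁ m₃ hm₃
    · intro m' hm'
      rw [List.flatten_cons, List.mem_append] at hm'
      rcases hm' with hm' | hm'
      · exact Or.inr ⟨m', List.mem_flatten_of_mem List.mem_cons_self hm', rfl⟩
      · exact (hg' m' hm').imp_right fun ⟨m₃, hm₃, h₃⟩ =>
          ⟨m₃, List.flatten_cons ▸ List.mem_append_right _ hm₃, h₃⟩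
    · rw [List.flatten_cons, movesApplicable_append]
      exact ⟨(movesApplicable_act_iff hm hind).1 hBa.1, hBs'a⟩
    · rw [List.flatten_cons, applyMoves_append, hBs'e, ← applyMoves_act_comm hm hind,
        List.flatten_cons, applyMoves_append]

theorem exists_reducedSequence (hw : WeaveValued T b) {L : List (MoveDatum α n)}
    (hL : ∀ m ∈ L, m.valid T) (happ : movesApplicable T.s L b) :
    ∃ Bs, IsReducedSequence T Bs ∧ movesApplicable T.s Bs.flatten b ∧
      applyMoves T.s Bs.flatten b = applyMoves T.s L b := by
  induction L generalizing b with
  | nil => exact ⟨[], ⟨by simp, .nil⟩, trivial, rfl⟩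
  | cons m L ih =>
    obtain ⟨h, happ⟩ := movesApplicable_cons.1 happ
    have hm := hL m List.mem_cons_self
    obtain ⟨Bs, hBs, hBsa, hBse⟩ :=
      ih (hw.act hm) (fun m' h' => hL m' (List.mem_cons_of_mem _ h')) happ
    obtain ⟨Bs', hBs', -, hBs'a, hBs'e⟩ := exists_reducedSequence_cons hm hw h hBs hBsa
    exact ⟨Bs', hBs', hBs'a, hBs'e.trans hBse⟩

end Reduction

section Counting

variable {B : List (MoveDatum α n)}

theorem countP_le_one_of_nodup_flatMap_support (h : (B.flatMap MoveDatum.support).Nodup)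
    (x : α) : B.countP (fun m => decide (m.x1 = x ∨ m.x2 = x)) ≤ 1 := by
  induction B with
  | nil => simp
  | cons m B ih =>
    rw [List.flatMap_cons, List.nodup_append] at h
    rw [List.countP_cons]
    by_cases hx : m.x1 = x ∨ m.x2 = x
    · have hB : B.countP (fun m => decide (m.x1 = x ∨ m.x2 = x)) = 0 :=
        List.countP_eq_zero.2 fun m' hm' hx' => h.2.2 x (MoveDatum.mem_support.2 hx) x
          (List.mem_flatMap.2 ⟨m', hm', MoveDatum.mem_support.2 (of_decide_eq_true hx')⟩) rfl
      rw [hB, if_pos (decide_eq_true hx)]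
    · simpa [hx] using ih h.2.1

theorem length_le_card_div_two_of_nodup_flatMap_support {I : Finset α}
    (h : (B.flatMap MoveDatum.support).Nodup) (hI : ∀ m ∈ B, ∀ y ∈ m.support, y ∈ I) :
    B.length ≤ I.card / 2 := by
  have hlen : (B.flatMap MoveDatum.support).length = 2 * B.length := by
    simp [List.length_flatMap, MoveDatum.support, mul_comm]
  have hsub : (B.flatMap MoveDatum.support).toFinset ⊆ I := fun y hy => by
    obtain ⟨m, hm, hy⟩ := List.mem_flatMap.1 (List.mem_toFinset.1 hy)
    exact hI m hm y hy
  have hcard := Finset.card_le_card hsub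
  rw [List.toFinset_card_of_nodup h, hlen] at hcard
  omega

end Counting

/-- any finite applicable sequence of intersection moves can be replaced
by an applicable reduced sequence with the same result: the sequence splits into
consecutive blocks, all moves in a block act on a common element of `G`, the elements
are pairwise distinct across blocks, each element of the weaving set appears in at
most one move of each block, and consequently each block has at most `⌊#I/2⌋` moves. -/
theorem reduced_sequence_of_moves
    {α : Type u} {H : Type v} [DecidableEq α] [AddCommGroup H] {n : ℕ}
    (T : WovenBasedMatrix α H n) (L : List (MoveDatum α n))
    (hvalid : ∀ m ∈ L, m.valid T) (happ : movesApplicable T.s L T.b) :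
    ∃ Bs : List (List (MoveDatum α n)),
      (∀ m ∈ Bs.flatten, m.valid T) ∧
      movesApplicable T.s Bs.flatten T.b ∧
      applyMoves T.s Bs.flatten T.b = applyMoves T.s L T.b ∧
      (∀ B ∈ Bs, ∀ m ∈ B, ∀ m' ∈ B, m.g = m'.g) ∧
      Bs.Pairwise (fun B B' => ∀ m ∈ B, ∀ m' ∈ B', m.g ≠ m'.g) ∧
      (∀ B ∈ Bs, ∀ x : α, (B.countP fun m => decide (m.x1 = x ∨ m.x2 = x)) ≤ 1) ∧
      (∀ B ∈ Bs, B.length ≤ T.I.card / 2) := by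
  obtain ⟨Bs, ⟨hblocks, hsep⟩, hBsa, hBse⟩ := exists_reducedSequence T.weave_val hvalid happ
  refine ⟨Bs, fun m hm => ?_, hBsa, hBse, fun B hB m hm m' hm' => ?_, hsep,
    fun B hB => ?_, fun B hB => ?_⟩
  · obtain ⟨B, hB, hmB⟩ := List.mem_flatten.1 hm
    obtain ⟨g, hg⟩ := hblocks B hB
    exact (hg.1 m hmB).1
  all_goals obtain ⟨g, hg⟩ := hblocks B hB
  · rw [(hg.1 m hm).2, (hg.1 m' hm').2]
  · exact countP_le_one_of_nodup_flatMap_support hg.2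
  · exact length_le_card_div_two_of_nodup_flatMap_support hg.2 fun m hm y hy =>
      (hg.1 m hm).1.mem_I hy
end

section
/- Let T be a woven based matrix over an abelian group H and let g_1,g_2 ∈ G_k\{s_k} be a G_k-complementary pair. Suppose the sequence I_△(g_2;x',y')∘I_□(g_1;x,y) with □,△ ∈ {1,2} is applicable to T, where y ≠ x' and y' ≠ x, and let T' be the resulting woven based matrix. Then T' can be obtained from T by: first applying the inverse elementary extension M_{3,k}^{-1} removing the complementary pair g_1,g_2; then applying an elementary extension M_{3,k} adding a G_k-complementary pair g_1',g_2'; then applying the intersection move I_1(g_1';x,x') when x ≠ x', and an intersection move I_○(g_1';y,y') (for suitable ○ ∈ {1,2}) when y ≠ y'; and finally relabeling g_1',g_2' as g_1,g_2. -/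
universe u v

variable {α : Type u} {H : Type v} [DecidableEq α] [AddCommGroup H] {n : ℕ}

lemma IMap_pos1 (b : α → α → H) (sj : α) {g x1 x2 a' : α} (h : a' = x1 ∨ a' = x2) :
    IMap b sj g x1 x2 g a' = b sj a' - b g a' := by
  unfold IMap
  rw [if_pos ⟨rfl, h⟩]

lemma IMap_neg (b : α → α → H) (sj : α) {g x1 x2 a a' : α}
    (h1 : ¬(a = g ∧ (a' = x1 ∨ a' = x2))) (h2 : ¬(a' = g ∧ (a = x1 ∨ a = x2))) :
    IMap b sj g x1 x2 a a' = b a a' := by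
  unfold IMap
  rw [if_neg h1, if_neg h2]

lemma IMap_pos2 (b : α → α → H) (sj : α) {g x1 x2 a : α}
    (h : a = x1 ∨ a = x2) (hag : a ≠ g) :
    IMap b sj g x1 x2 a g = b a sj - b a g := by
  unfold IMap
  rw [if_neg (fun hh => hag hh.1), if_pos ⟨rfl, h⟩]

/-- entries whose first coordinate avoids `g` and `x1, x2` are unchanged -/
lemma IMap_row_off (b : α → α → H) (sj : α) {g x1 x2 r : α} (a : α)
    (hrg : r ≠ g) (hr1 : r ≠ x1) (hr2 : r ≠ x2) :
    IMap b sj g x1 x2 r a = b r a :=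
  IMap_neg b sj (fun hh => hrg hh.1) (fun hh => hh.2.elim hr1 hr2)

/-- entries in row `g` with column off `x1, x2` are unchanged -/
lemma IMap_g_off (b : α → α → H) (sj : α) {g x1 x2 a' : α}
    (h2 : a' ≠ x1) (h3 : a' ≠ x2) (hg1 : g ≠ x1) (hg2 : g ≠ x2) :
    IMap b sj g x1 x2 g a' = b g a' :=
  IMap_neg b sj (fun hh => hh.2.elim h2 h3) (fun hh => hh.2.elim hg1 hg2)

/-- entries avoiding `g` in both coordinates are unchanged -/
lemma IMap_offg (b : α → α → H) (sj : α) {g x1 x2 a a' : α}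
    (h1 : a ≠ g) (h2 : a' ≠ g) :
    IMap b sj g x1 x2 a a' = b a a' :=
  IMap_neg b sj (fun hh => h1 hh.1) (fun hh => h2 hh.1)

lemma IMap_involutive (b : α → α → H) (sj : α) {g x1 x2 : α}
    (hg : sj ≠ g) (h1 : x1 ≠ g) (h2 : x2 ≠ g) :
    IMap (IMap b sj g x1 x2) sj g x1 x2 = b := by
  funext a a'
  by_cases hA : a = g ∧ (a' = x1 ∨ a' = x2)
  · have ha'g : a' ≠ g := by rcases hA.2 with rfl | rfl; exacts [h1, h2]
    rw [hA.1, IMap_pos1 _ _ hA.2,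
      IMap_neg _ _ (fun hh => hg hh.1) (fun hh => ha'g hh.1),
      IMap_pos1 _ _ hA.2]
    abel
  · by_cases hB : a' = g ∧ (a = x1 ∨ a = x2)
    · have hag : a ≠ g := by rcases hB.2 with rfl | rfl; exacts [h1, h2]
      rw [hB.1, IMap_pos2 _ _ hB.2 hag,
        IMap_neg _ _ (fun hh => hag hh.1) (fun hh => hg hh.1),
        IMap_pos2 _ _ hB.2 hag]
      abel
    · rw [IMap_neg _ _ hA hB, IMap_neg _ _ hA hB]

lemma mem_carrier_of_G (T : WovenBasedMatrix α H n) {i : Fin n} {a : α}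
    (h : a ∈ T.G i) : a ∈ T.carrier :=
  Finset.mem_union_left _ (Finset.mem_biUnion.mpr ⟨i, Finset.mem_univ i, h⟩)

lemma mem_carrier_of_I (T : WovenBasedMatrix α H n) {a : α} (h : a ∈ T.I) :
    a ∈ T.carrier :=
  Finset.mem_union_right _ h

lemma wbm_IMap (T : WovenBasedMatrix α H n) (j : Fin n) {g x1 x2 : α}
    (hg : g ∈ T.G j) (hgs : g ≠ T.s j) (hx1 : x1 ∈ T.I) (hx2 : x2 ∈ T.I) :
    ∃ T' : WovenBasedMatrix α H n, T'.G = T.G ∧ T'.I = T.I ∧ T'.s = T.s ∧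
      T'.b = IMap T.b (T.s j) g x1 x2 := by
  classical
  have hgI : g ∉ T.I := fun h => Finset.disjoint_left.mp (T.disjointI j) hg h
  have hsg : ∀ i, T.s i ≠ g := by
    intro i h
    by_cases hij : i = j
    · exact hgs (hij ▸ h).symm
    · exact Finset.disjoint_left.mp (T.disjointG i j hij) (T.s_mem i) (h ▸ hg)
  have hIg : ∀ z ∈ T.I, z ≠ g := fun z hz h => hgI (h ▸ hz)
  have hsx : ∀ i z, z ∈ T.I → T.s i ≠ z := fun i z hz h =>
    Finset.disjoint_left.mp (T.disjointI i) (T.s_mem i) (h ▸ hz)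
  have hrow : ∀ i z, IMap T.b (T.s j) g x1 x2 (T.s i) z = T.b (T.s i) z := fun i z =>
    IMap_neg _ _ (fun hh => hsg i hh.1)
      (fun hh => hh.2.elim (hsx i x1 hx1) (hsx i x2 hx2))
  refine ⟨⟨T.G, T.I, T.s, IMap T.b (T.s j) g x1 x2, T.s_mem, T.disjointG, T.disjointI,
    ?_, ?_, ?_, ?_, ?_⟩, rfl, rfl, rfl, rfl⟩
  · -- skew
    intro a ha a' ha'
    by_cases hA : a = g ∧ (a' = x1 ∨ a' = x2)
    · have ha'g : a' ≠ g := by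
        rcases hA.2 with rfl | rfl
        exacts [hIg _ hx1, hIg _ hx2]
      have hma : a' ∈ T.carrier := by
        rcases hA.2 with rfl | rfl
        exacts [mem_carrier_of_I T hx1, mem_carrier_of_I T hx2]
      rw [hA.1, IMap_pos1 _ _ hA.2, IMap_pos2 _ _ hA.2 ha'g,
        T.skew (T.s j) (mem_carrier_of_G T (T.s_mem j)) a' hma,
        T.skew g (mem_carrier_of_G T hg) a' hma]
      abel
    · by_cases hB : a' = g ∧ (a = x1 ∨ a = x2)
      · have hag : a ≠ g := by
          rcases hB.2 with rfl | rfl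
          exacts [hIg _ hx1, hIg _ hx2]
        have hma : a ∈ T.carrier := by
          rcases hB.2 with rfl | rfl
          exacts [mem_carrier_of_I T hx1, mem_carrier_of_I T hx2]
        rw [hB.1, IMap_pos2 _ _ hB.2 hag, IMap_pos1 _ _ hB.2,
          T.skew a hma (T.s j) (mem_carrier_of_G T (T.s_mem j)),
          T.skew a hma g (mem_carrier_of_G T hg)]
        abel
      · rw [IMap_neg _ _ hA hB, IMap_neg _ _ hB hA]
        exact T.skew a ha a' ha'
  · -- diag
    intro a ha
    have hne : ¬(a = g ∧ (a = x1 ∨ a = x2)) := by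
      rintro ⟨rfl, hm⟩
      rcases hm with rfl | rfl
      exacts [hgI hx1, hgI hx2]
    rw [IMap_neg _ _ hne hne]
    exact T.diag a ha
  · -- inter_zero
    intro z hz w hw
    rw [IMap_neg _ _ (fun hh => hIg z hz hh.1) (fun hh => hIg w hw hh.1)]
    exact T.inter_zero z hz w hw
  · -- weave_two
    intro z hz
    obtain ⟨i, j', hij, h1, h2, h3, h4⟩ := T.weave_two z hz
    refine ⟨i, j', hij, ?_, ?_, ?_, ?_⟩
    · rw [hrow]; exact h1
    · rw [hrow]; exact h2
    · rw [hrow, hrow]; exact h3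
    · intro m hm; exact h4 m (by rwa [hrow] at hm)
  · -- weave_val
    intro i h hh z hz
    by_cases hhg : h = g
    · subst hhg
      have hij : i = j := by
        by_contra hij
        exact Finset.disjoint_left.mp (T.disjointG i j hij) hh hg
      subst hij
      by_cases hm : z = x1 ∨ z = x2
      · rw [IMap_pos1 _ _ hm, hrow]
        rcases T.weave_val i h hh z hz with h0 | h0
        · right; rw [h0, sub_zero]
        · left; rw [h0, sub_self]
      · push_neg at hm
        rw [IMap_neg _ _ (fun hh2 => hh2.2.elim hm.1 hm.2) (fun hh2 => hIg z hz hh2.1),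
          hrow]
        exact T.weave_val i h hh z hz
    · rw [IMap_neg _ _ (fun hh2 => hhg hh2.1) (fun hh2 => hIg z hz hh2.1), hrow]
      exact T.weave_val i h hh z hz

/-- if `g₁, g₂` are a `G k`-complementary pair and the sequence
`I_△(g₂;x',y') ∘ I_□(g₁;x,y)` is applied to `T` (with `y ≠ x'` and `y' ≠ x`), then the
resulting woven based matrix can also be obtained from `T` by first removing the
complementary pair `g₁, g₂` (an inverse extension `M₃⁻¹`) and re-adding a possibly
different `G k`-complementary pair in its place (an extension `M₃`, encoded below by a
woven based matrix on the same underlying data whose pairing `c` agrees with `b` away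
from `g₁, g₂` and for which `g₁, g₂` are complementary), then performing the
intersection move `I₁(g₁';x,x')` when `x ≠ x'`, and an intersection move
`I_○(g₁';y,y')` when `y ≠ y'`, with the new pair relabeled as `g₁, g₂`. -/
theorem tech_replacement_two
    {α : Type u} {H : Type v} [DecidableEq α] [AddCommGroup H] {n : ℕ}
    (T : WovenBasedMatrix α H n) (k : Fin n) (g1 g2 x y x' y' : α)
    (hg1 : g1 ∈ T.G k) (hg1s : g1 ≠ T.s k)
    (hg2 : g2 ∈ T.G k) (hg2s : g2 ≠ T.s k) (hg12 : g1 ≠ g2)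
    (hcomp : ∀ a ∈ T.carrier, T.b g1 a + T.b g2 a = T.b (T.s k) a)
    (hx : x ∈ T.I) (hy : y ∈ T.I) (hx' : x' ∈ T.I) (hy' : y' ∈ T.I)
    (hxy : x ≠ y) (hx'y' : x' ≠ y') (hyx' : y ≠ x') (hy'x : y' ≠ x)
    (sq tr : Fin 2)
    (happ1 : MoveApplicable sq T.b (T.s k) g1 x y)
    (happ2 : MoveApplicable tr (IMap T.b (T.s k) g1 x y) (T.s k) g2 x' y') :
    ∃ c : α → α → H,
      (∃ Tc : WovenBasedMatrix α H n, Tc.G = T.G ∧ Tc.I = T.I ∧ Tc.s = T.s ∧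
        Tc.b = c) ∧
      (∀ a a' : α, a ≠ g1 → a ≠ g2 → a' ≠ g1 → a' ≠ g2 → c a a' = T.b a a') ∧
      (∀ a ∈ T.carrier, c g1 a + c g2 a = c (T.s k) a) ∧
      ∃ d e : α → α → H,
        (x = x' → d = c) ∧
        (x ≠ x' → d = IMap c (T.s k) g1 x x') ∧
        (y = y' → e = d) ∧
        (y ≠ y' → e = IMap d (T.s k) g1 y y') ∧
        e = IMap (IMap T.b (T.s k) g1 x y) (T.s k) g2 x' y' := by
    classical
  have cmem : ∀ z ∈ T.I, z ∈ T.carrier := fun z hz => Finset.mem_union_right _ hz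
  have hdisj : ∀ z ∈ T.I, ∀ h ∈ T.G k, z ≠ h ∧ h ≠ z := by
    intro z hz h hh
    have hn := Finset.disjoint_left.mp (T.disjointI k) hh
    exact ⟨fun e => hn (e ▸ hz), fun e => hn (e.symm ▸ hz)⟩
  obtain ⟨nxg1, ng1x⟩ := hdisj x hx g1 hg1
  obtain ⟨nxg2, ng2x⟩ := hdisj x hx g2 hg2
  obtain ⟨nxs, nsx⟩ := hdisj x hx (T.s k) (T.s_mem k)
  obtain ⟨nyg1, ng1y⟩ := hdisj y hy g1 hg1
  obtain ⟨nyg2, ng2y⟩ := hdisj y hy g2 hg2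
  obtain ⟨nys, nsy⟩ := hdisj y hy (T.s k) (T.s_mem k)
  obtain ⟨nx'g1, ng1x'⟩ := hdisj x' hx' g1 hg1
  obtain ⟨nx'g2, ng2x'⟩ := hdisj x' hx' g2 hg2
  obtain ⟨nx's, nsx'⟩ := hdisj x' hx' (T.s k) (T.s_mem k)
  obtain ⟨ny'g1, ng1y'⟩ := hdisj y' hy' g1 hg1
  obtain ⟨ny'g2, ng2y'⟩ := hdisj y' hy' g2 hg2
  obtain ⟨ny's, nsy'⟩ := hdisj y' hy' (T.s k) (T.s_mem k)
  have nsg1 : T.s k ≠ g1 := Ne.symm hg1s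
  have nsg2 : T.s k ≠ g2 := Ne.symm hg2s
  have Cx := hcomp x (cmem x hx)
  have Cy := hcomp y (cmem y hy)
  have Cx' := hcomp x' (cmem x' hx')
  have Cy' := hcomp y' (cmem y' hy')
  obtain ⟨T1, hG1, hI1, hs1, hb1⟩ := wbm_IMap T k hg1 hg1s hx hy
  obtain ⟨T2, hG2, hI2, hs2, hb2⟩ :=
    wbm_IMap T1 k (g := g2) (hG1.symm ▸ hg2) (hs1.symm ▸ hg2s)
      (hI1.symm ▸ hx') (hI1.symm ▸ hy')
  rw [hb1, hs1] at hb2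
  have hG2' : T2.G = T.G := hG2.trans hG1
  have hI2' : T2.I = T.I := hI2.trans hI1
  have hs2' : T2.s = T.s := hs2.trans hs1
  by_cases hyy' : y = y'
  · subst hyy'
    by_cases hxx' : x = x'
    · subst hxx'
      refine ⟨IMap (IMap T.b (T.s k) g1 x y) (T.s k) g2 x y,
        ⟨T2, hG2', hI2', hs2', hb2⟩, ?_, ?_,
        IMap (IMap T.b (T.s k) g1 x y) (T.s k) g2 x y,
        IMap (IMap T.b (T.s k) g1 x y) (T.s k) g2 x y,
        fun _ => rfl, fun h => absurd rfl h, fun _ => rfl, fun h => absurd rfl h, rfl⟩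
      · intro a a' ha1 ha2 ha3 ha4
        rw [IMap_offg _ _ ha2 ha4, IMap_offg _ _ ha1 ha3]
      · intro a ha
        by_cases hax : a = x
        simp only [IMap, nsg1, nsg2, hg12, Ne.symm hg12, hg1s, hg2s, nxg1, ng1x, nxg2, ng2x, nxs, nsx, nyg1, ng1y, nyg2, ng2y, nys, nsy, nx'g1, ng1x', nx'g2, ng2x', nx's, nsx', ny'g1, ng1y', ny'g2, ng2y', ny's, nsy', hxy, Ne.symm hxy, hax, ne_eq, not_false_eq_true, if_true, if_false, and_true, and_false, true_and, false_and, or_false, false_or, and_self, or_self]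
        rw [← Cx]
        abel
        · by_cases hay : a = y
          ·
            simp only [IMap, nsg1, nsg2, hg12, Ne.symm hg12, hg1s, hg2s, nxg1, ng1x, nxg2, ng2x, nxs, nsx, nyg1, ng1y, nyg2, ng2y, nys, nsy, nx'g1, ng1x', nx'g2, ng2x', nx's, nsx', ny'g1, ng1y', ny'g2, ng2y', ny's, nsy', hxy, Ne.symm hxy, hay, ne_eq, not_false_eq_true, if_true, if_false, and_true, and_false, true_and, false_and, or_false, false_or, and_self, or_self]
            rw [← Cy]
            abel
          ·
            simp only [IMap, nsg1, nsg2, hg12, Ne.symm hg12, hg1s, hg2s, nxg1, ng1x, nxg2, ng2x, nxs, nsx, nyg1, ng1y, nyg2, ng2y, nys, nsy, nx'g1, ng1x', nx'g2, ng2x', nx's, nsx', ny'g1, ng1y', ny'g2, ng2y', ny's, nsy', hxy, Ne.symm hxy, hax, hay, ne_eq, not_false_eq_true, if_true, if_false, and_true, and_false, true_and, false_and, or_false, false_or, and_self, or_self]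
            exact hcomp a ha
    · obtain ⟨T3, hG3, hI3, hs3, hb3⟩ :=
        wbm_IMap T2 k (g := g1) (hG2'.symm ▸ hg1) (hs2'.symm ▸ hg1s)
          (hI2'.symm ▸ hx) (hI2'.symm ▸ hx')
      rw [hb2, hs2'] at hb3
      refine ⟨IMap (IMap (IMap T.b (T.s k) g1 x y) (T.s k) g2 x' y) (T.s k) g1 x x',
        ⟨T3, hG3.trans hG2', hI3.trans hI2', hs3.trans hs2', hb3⟩, ?_, ?_,
        IMap (IMap T.b (T.s k) g1 x y) (T.s k) g2 x' y,
        IMap (IMap T.b (T.s k) g1 x y) (T.s k) g2 x' y,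
        fun h => absurd h hxx',
        fun _ => (IMap_involutive _ _ nsg1 nxg1 nx'g1).symm,
        fun _ => rfl, fun h => absurd rfl h, rfl⟩
      · intro a a' ha1 ha2 ha3 ha4
        rw [IMap_offg _ _ ha1 ha3, IMap_offg _ _ ha2 ha4, IMap_offg _ _ ha1 ha3]
      · intro a ha
        by_cases hax : a = x
        simp only [IMap, nsg1, nsg2, hg12, Ne.symm hg12, hg1s, hg2s, nxg1, ng1x, nxg2, ng2x, nxs, nsx, nyg1, ng1y, nyg2, ng2y, nys, nsy, nx'g1, ng1x', nx'g2, ng2x', nx's, nsx', ny'g1, ng1y', ny'g2, ng2y', ny's, nsy', hxy, Ne.symm hxy, hxx', Ne.symm hxx', hyx', Ne.symm hyx', hax, ne_eq, not_false_eq_true, if_true, if_false, and_true, and_false, true_and, false_and, or_false, false_or, and_self, or_self]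
        rw [← Cx]
        abel
        · by_cases hax' : a = x'
          ·
            simp only [IMap, nsg1, nsg2, hg12, Ne.symm hg12, hg1s, hg2s, nxg1, ng1x, nxg2, ng2x, nxs, nsx, nyg1, ng1y, nyg2, ng2y, nys, nsy, nx'g1, ng1x', nx'g2, ng2x', nx's, nsx', ny'g1, ng1y', ny'g2, ng2y', ny's, nsy', hxy, Ne.symm hxy, hxx', Ne.symm hxx', hyx', Ne.symm hyx', hax', ne_eq, not_false_eq_true, if_true, if_false, and_true, and_false, true_and, false_and, or_false, false_or, and_self, or_self]
            rw [← Cx']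
            abel
          · by_cases hay : a = y
            ·
              simp only [IMap, nsg1, nsg2, hg12, Ne.symm hg12, hg1s, hg2s, nxg1, ng1x, nxg2, ng2x, nxs, nsx, nyg1, ng1y, nyg2, ng2y, nys, nsy, nx'g1, ng1x', nx'g2, ng2x', nx's, nsx', ny'g1, ng1y', ny'g2, ng2y', ny's, nsy', hxy, Ne.symm hxy, hxx', Ne.symm hxx', hyx', Ne.symm hyx', hay, ne_eq, not_false_eq_true, if_true, if_false, and_true, and_false, true_and, false_and, or_false, false_or, and_self, or_self]
              rw [← Cy]
              abel
            ·
              simp only [IMap, nsg1, nsg2, hg12, Ne.symm hg12, hg1s, hg2s, nxg1, ng1x, nxg2, ng2x, nxs, nsx, nyg1, ng1y, nyg2, ng2y, nys, nsy, nx'g1, ng1x', nx'g2, ng2x', nx's, nsx', ny'g1, ng1y', ny'g2, ng2y', ny's, nsy', hxy, Ne.symm hxy, hxx', Ne.symm hxx', hyx', Ne.symm hyx', hax, hax', hay, ne_eq, not_false_eq_true, if_true, if_false, and_true, and_false, true_and, false_and, or_false, false_or, and_self, or_self]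
              exact hcomp a ha
  · by_cases hxx' : x = x'
    · subst hxx'
      obtain ⟨T3, hG3, hI3, hs3, hb3⟩ :=
        wbm_IMap T2 k (g := g1) (hG2'.symm ▸ hg1) (hs2'.symm ▸ hg1s)
          (hI2'.symm ▸ hy) (hI2'.symm ▸ hy')
      rw [hb2, hs2'] at hb3
      refine ⟨IMap (IMap (IMap T.b (T.s k) g1 x y) (T.s k) g2 x y') (T.s k) g1 y y',
        ⟨T3, hG3.trans hG2', hI3.trans hI2', hs3.trans hs2', hb3⟩, ?_, ?_,
        IMap (IMap (IMap T.b (T.s k) g1 x y) (T.s k) g2 x y') (T.s k) g1 y y',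
        IMap (IMap T.b (T.s k) g1 x y) (T.s k) g2 x y',
        fun _ => rfl, fun h => absurd rfl h,
        fun h => absurd h hyy',
        fun _ => (IMap_involutive _ _ nsg1 nyg1 ny'g1).symm, rfl⟩
      · intro a a' ha1 ha2 ha3 ha4
        rw [IMap_offg _ _ ha1 ha3, IMap_offg _ _ ha2 ha4, IMap_offg _ _ ha1 ha3]
      · intro a ha
        by_cases hax : a = x
        simp only [IMap, nsg1, nsg2, hg12, Ne.symm hg12, hg1s, hg2s, nxg1, ng1x, nxg2, ng2x, nxs, nsx, nyg1, ng1y, nyg2, ng2y, nys, nsy, nx'g1, ng1x', nx'g2, ng2x', nx's, nsx', ny'g1, ng1y', ny'g2, ng2y', ny's, nsy', hxy, Ne.symm hxy, hyy', Ne.symm hyy', hy'x, Ne.symm hy'x, hax, ne_eq, not_false_eq_true, if_true, if_false, and_true, and_false, true_and, false_and, or_false, false_or, and_self, or_self]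
        rw [← Cx]
        abel
        · by_cases hay : a = y
          ·
            simp only [IMap, nsg1, nsg2, hg12, Ne.symm hg12, hg1s, hg2s, nxg1, ng1x, nxg2, ng2x, nxs, nsx, nyg1, ng1y, nyg2, ng2y, nys, nsy, nx'g1, ng1x', nx'g2, ng2x', nx's, nsx', ny'g1, ng1y', ny'g2, ng2y', ny's, nsy', hxy, Ne.symm hxy, hyy', Ne.symm hyy', hy'x, Ne.symm hy'x, hay, ne_eq, not_false_eq_true, if_true, if_false, and_true, and_false, true_and, false_and, or_false, false_or, and_self, or_self]
            rw [← Cy]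
            abel
          · by_cases hay' : a = y'
            ·
              simp only [IMap, nsg1, nsg2, hg12, Ne.symm hg12, hg1s, hg2s, nxg1, ng1x, nxg2, ng2x, nxs, nsx, nyg1, ng1y, nyg2, ng2y, nys, nsy, nx'g1, ng1x', nx'g2, ng2x', nx's, nsx', ny'g1, ng1y', ny'g2, ng2y', ny's, nsy', hxy, Ne.symm hxy, hyy', Ne.symm hyy', hy'x, Ne.symm hy'x, hay', ne_eq, not_false_eq_true, if_true, if_false, and_true, and_false, true_and, false_and, or_false, false_or, and_self, or_self]
              rw [← Cy']
              abel
            ·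
              simp only [IMap, nsg1, nsg2, hg12, Ne.symm hg12, hg1s, hg2s, nxg1, ng1x, nxg2, ng2x, nxs, nsx, nyg1, ng1y, nyg2, ng2y, nys, nsy, nx'g1, ng1x', nx'g2, ng2x', nx's, nsx', ny'g1, ng1y', ny'g2, ng2y', ny's, nsy', hxy, Ne.symm hxy, hyy', Ne.symm hyy', hy'x, Ne.symm hy'x, hax, hay, hay', ne_eq, not_false_eq_true, if_true, if_false, and_true, and_false, true_and, false_and, or_false, false_or, and_self, or_self]
              exact hcomp a ha
    · obtain ⟨T3, hG3, hI3, hs3, hb3⟩ :=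
        wbm_IMap T2 k (g := g1) (hG2'.symm ▸ hg1) (hs2'.symm ▸ hg1s)
          (hI2'.symm ▸ hy) (hI2'.symm ▸ hy')
      rw [hb2, hs2'] at hb3
      have hG3' : T3.G = T.G := hG3.trans hG2'
      have hI3' : T3.I = T.I := hI3.trans hI2'
      have hs3' : T3.s = T.s := hs3.trans hs2'
      obtain ⟨T4, hG4, hI4, hs4, hb4⟩ :=
        wbm_IMap T3 k (g := g1) (hG3'.symm ▸ hg1) (hs3'.symm ▸ hg1s)
          (hI3'.symm ▸ hx) (hI3'.symm ▸ hx')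
      rw [hb3, hs3'] at hb4
      refine ⟨IMap (IMap (IMap (IMap T.b (T.s k) g1 x y) (T.s k) g2 x' y')
          (T.s k) g1 y y') (T.s k) g1 x x',
        ⟨T4, hG4.trans hG3', hI4.trans hI3', hs4.trans hs3', hb4⟩, ?_, ?_,
        IMap (IMap (IMap T.b (T.s k) g1 x y) (T.s k) g2 x' y') (T.s k) g1 y y',
        IMap (IMap T.b (T.s k) g1 x y) (T.s k) g2 x' y',
        fun h => absurd h hxx',
        fun _ => (IMap_involutive _ _ nsg1 nxg1 nx'g1).symm,
        fun h => absurd h hyy',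
        fun _ => (IMap_involutive _ _ nsg1 nyg1 ny'g1).symm, rfl⟩
      · intro a a' ha1 ha2 ha3 ha4
        rw [IMap_offg _ _ ha1 ha3, IMap_offg _ _ ha1 ha3, IMap_offg _ _ ha2 ha4,
          IMap_offg _ _ ha1 ha3]
      · intro a ha
        by_cases hax : a = x
        simp only [IMap, nsg1, nsg2, hg12, Ne.symm hg12, hg1s, hg2s, nxg1, ng1x, nxg2, ng2x, nxs, nsx, nyg1, ng1y, nyg2, ng2y, nys, nsy, nx'g1, ng1x', nx'g2, ng2x', nx's, nsx', ny'g1, ng1y', ny'g2, ng2y', ny's, nsy', hxy, Ne.symm hxy, hxx', Ne.symm hxx', hyx', Ne.symm hyx', hyy', Ne.symm hyy', hx'y', Ne.symm hx'y', hy'x, Ne.symm hy'x, hax, ne_eq, not_false_eq_true, if_true, if_false, and_true, and_false, true_and, false_and, or_false, false_or, and_self, or_self]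
        rw [← Cx]
        abel
        · by_cases hax' : a = x'
          ·
            simp only [IMap, nsg1, nsg2, hg12, Ne.symm hg12, hg1s, hg2s, nxg1, ng1x, nxg2, ng2x, nxs, nsx, nyg1, ng1y, nyg2, ng2y, nys, nsy, nx'g1, ng1x', nx'g2, ng2x', nx's, nsx', ny'g1, ng1y', ny'g2, ng2y', ny's, nsy', hxy, Ne.symm hxy, hxx', Ne.symm hxx', hyx', Ne.symm hyx', hyy', Ne.symm hyy', hx'y', Ne.symm hx'y', hy'x, Ne.symm hy'x, hax', ne_eq, not_false_eq_true, if_true, if_false, and_true, and_false, true_and, false_and, or_false, false_or, and_self, or_self]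
            rw [← Cx']
            abel
          · by_cases hay : a = y
            ·
              simp only [IMap, nsg1, nsg2, hg12, Ne.symm hg12, hg1s, hg2s, nxg1, ng1x, nxg2, ng2x, nxs, nsx, nyg1, ng1y, nyg2, ng2y, nys, nsy, nx'g1, ng1x', nx'g2, ng2x', nx's, nsx', ny'g1, ng1y', ny'g2, ng2y', ny's, nsy', hxy, Ne.symm hxy, hxx', Ne.symm hxx', hyx', Ne.symm hyx', hyy', Ne.symm hyy', hx'y', Ne.symm hx'y', hy'x, Ne.symm hy'x, hay, ne_eq, not_false_eq_true, if_true, if_false, and_true, and_false, true_and, false_and, or_false, false_or, and_self, or_self]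
              rw [← Cy]
              abel
            · by_cases hay' : a = y'
              ·
                simp only [IMap, nsg1, nsg2, hg12, Ne.symm hg12, hg1s, hg2s, nxg1, ng1x, nxg2, ng2x, nxs, nsx, nyg1, ng1y, nyg2, ng2y, nys, nsy, nx'g1, ng1x', nx'g2, ng2x', nx's, nsx', ny'g1, ng1y', ny'g2, ng2y', ny's, nsy', hxy, Ne.symm hxy, hxx', Ne.symm hxx', hyx', Ne.symm hyx', hyy', Ne.symm hyy', hx'y', Ne.symm hx'y', hy'x, Ne.symm hy'x, hay', ne_eq, not_false_eq_true, if_true, if_false, and_true, and_false, true_and, false_and, or_false, false_or, and_self, or_self]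
                rw [← Cy']
                abel
              ·
                simp only [IMap, nsg1, nsg2, hg12, Ne.symm hg12, hg1s, hg2s, nxg1, ng1x, nxg2, ng2x, nxs, nsx, nyg1, ng1y, nyg2, ng2y, nys, nsy, nx'g1, ng1x', nx'g2, ng2x', nx's, nsx', ny'g1, ng1y', ny'g2, ng2y', ny's, nsy', hxy, Ne.symm hxy, hxx', Ne.symm hxx', hyx', Ne.symm hyx', hyy', Ne.symm hyy', hx'y', Ne.symm hx'y', hy'x, Ne.symm hy'x, hax, hax', hay, hay', ne_eq, not_false_eq_true, if_true, if_false, and_true, and_false, true_and, false_and, or_false, false_or, and_self, or_self]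
                exact hcomp a ha
end
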